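/- arXiv:2411.17145 — 7 statements merged into one kernel-verified Lean document; each statement's English description precedes it below -/
import Mathlib

section
/- Let X be an SCA(t!; t, v) (so every sequence of t distinct symbols is covered by exactly one permutation of X) and let 0 < a < t. Then in every array C ∈ C_a(X) from the standard construction, each (t−a)-way interaction T is covered by exactly μ(T) rows of C. -/
/-- A permutation `π` of `[v]` covers a sequence `s` of distinct elements if the
elements appear in order in `π`, i.e. `π⁻¹(s i) < π⁻¹(s j)` for `i < j`. -/
def SeqCovers {v t : ℕ} (π : Equiv.Perm (Fin v)) (s : Fin t → Fin v) : Prop :=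
  ∀ i j : Fin t, i < j → π.symm (s i) < π.symm (s j)

instance {v t : ℕ} (s : Fin t → Fin v) :
    DecidablePred fun π : Equiv.Perm (Fin v) => SeqCovers π s := fun π => by
  unfold SeqCovers; infer_instance

/-- `X` is a sequence covering array SCA(N; t, v): a set of `N` permutations of `[v]`
such that every sequence of `t` distinct elements of `[v]` is covered by at least one. -/
def IsSCA (N t v : ℕ) (X : Finset (Equiv.Perm (Fin v))) : Prop :=
  X.card = N ∧ ∀ s : Fin t → Fin v, Function.Injective s → ∃ π ∈ X, SeqCovers π s

/-- `μ(T)` for a `t`-way interaction with symbol vector `ν`: the product over symbols `σ`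
of `|τ_σ(T)|!` where `τ_σ(T)` is the set of positions carrying symbol `σ`. -/
def mu {w t : ℕ} (ν : Fin t → Fin w) : ℕ :=
  ∏ σ : Fin w, Nat.factorial (Finset.univ.filter fun i => ν i = σ).card

/-- The number of rows of `C` covering the interaction given by distinct columns `c i`
and symbols `ν i`. -/
def CoversCount {κ : Type} {w t : ℕ}
    (C : Multiset (κ → Fin w)) (c : Fin t → κ) (ν : Fin t → Fin w) : ℕ :=
  C.countP fun ρ => ∀ i, ρ (c i) = ν i

/-- `C` is an excess coverage array CA_X(N; t, k, v): an `N × k` array (multiset of rows)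
over `[v]` in which every `t`-way interaction `T` is covered by at least `μ(T)` rows. -/
def IsCAX (N t k v : ℕ) (C : Multiset (Fin k → Fin v)) : Prop :=
  Multiset.card C = N ∧
  ∀ c : Fin t → Fin k, Function.Injective c →
    ∀ ν : Fin t → Fin v, mu ν ≤ CoversCount C c ν

/-- The entry of the constructed array in the row of permutation `π` and column `ν`:
the number of symbols of `A = range u` that precede `ν` in `π`. -/
def ConstrEntry {v a : ℕ} (π : Equiv.Perm (Fin v)) (u : Fin a → Fin v) (ν : Fin v) :
    Fin (a + 1) :=
  ⟨(Finset.univ.filter fun i : Fin a => π.symm (u i) < π.symm ν).card,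
    Nat.lt_succ_of_le (le_trans (Finset.card_filter_le _ _) (by simp))⟩

/-- The array of Construction 1 determined by the ordering `u` of an `a`-set `A ⊆ [v]`:
rows are indexed by the permutations of `X` covering `u`, columns by `[v] ∖ A`, and the
entry in row `ρ`, column `ν` is the number of symbols of `A` preceding `ν` in `ρ`.
The multiset `C_a(X)` consists of these arrays over all injective `u : Fin a → Fin v`. -/
def ConstrArray {v a : ℕ} (X : Finset (Equiv.Perm (Fin v))) (u : Fin a → Fin v) :
    Multiset ({ν : Fin v // ∀ i, u i ≠ ν} → Fin (a + 1)) :=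
  (X.filter fun π => SeqCovers π u).val.map fun π ν => ConstrEntry π u ν.1



namespace SCAAux

lemma block_lt_of {B x y r s : ℕ} (hr : r < B) (h : x < y) :
    x * B + r < y * B + s :=
  calc x * B + r < x * B + B := Nat.add_lt_add_left hr _
  _ = (x + 1) * B := by ring
  _ ≤ y * B := Nat.mul_le_mul_right B h
  _ ≤ y * B + s := Nat.le_add_right _ _

lemma block_lt {B x y r s : ℕ} (hr : r < B) (hs : s < B) :
    x * B + r < y * B + s ↔ x < y ∨ (x = y ∧ r < s) := by
  constructor
  · intro h
    rcases lt_trichotomy x y with hxy | hxy | hxy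
    · exact Or.inl hxy
    · subst hxy; exact Or.inr ⟨rfl, Nat.lt_of_add_lt_add_left h⟩
    · exact absurd (block_lt_of hs hxy) (Nat.lt_asymm h)
  · rintro (hxy | ⟨rfl, hrs⟩)
    · exact block_lt_of hr hxy
    · exact Nat.add_lt_add_left hrs _

lemma block_eq {B x y r s : ℕ} (hr : r < B) (hs : s < B)
    (h : x * B + r = y * B + s) : x = y ∧ r = s := by
  have hrs : r = s := by
    have h1 : (x * B + r) % B = r := by
      rw [Nat.mul_comm x B, Nat.mul_add_mod, Nat.mod_eq_of_lt hr]
    have h2 : (y * B + s) % B = s := by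
      rw [Nat.mul_comm y B, Nat.mul_add_mod, Nat.mod_eq_of_lt hs]
    rw [← h1, ← h2, h]
  refine ⟨?_, hrs⟩
  subst hrs
  have := Nat.add_right_cancel h
  exact Nat.eq_of_mul_eq_mul_right ((Nat.zero_le r).trans_lt hr) this

lemma card_filter_lt {n k : ℕ} (hk : k ≤ n) :
    (Finset.univ.filter fun j : Fin n => (j : ℕ) < k).card = k := by
  have h : ∀ m ∈ Finset.range k, m < n := fun m hm =>
    lt_of_lt_of_le (Finset.mem_range.1 hm) hk
  have heq : (Finset.univ.filter fun j : Fin n => (j : ℕ) < k) =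
      (Finset.range k).attachFin h := by
    ext j
    simp [Finset.mem_attachFin]
  rw [heq, Finset.card_attachFin, Finset.card_range]

lemma mono_fiber_id {n : ℕ} {β : Type*} [DecidableEq β] (ν : Fin n → β) (w : Fin n → Fin n)
    (hν : ∀ x, ν (w x) = ν x)
    (hmono : ∀ x y, ν x = ν y → x < y → w x < w y) : ∀ x, w x = x := by
  intro x
  set F := Finset.univ.filter fun y => ν y = ν x with hF
  have hxF : x ∈ F := by simp [hF]
  have hmemE : ∀ y : Fin F.card, ν (F.orderEmbOfFin rfl y) = ν x := by
    intro y
    have h := Finset.orderEmbOfFin_mem F rfl y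
    exact (Finset.mem_filter.1 h).2
  have hwE : ∀ y : Fin F.card, w (F.orderEmbOfFin rfl y) ∈ F := by
    intro y
    simp only [hF, Finset.mem_filter, Finset.mem_univ, true_and]
    rw [hν]; exact hmemE y
  have hsm : StrictMono (fun y => w (F.orderEmbOfFin rfl y)) := by
    intro y y' hy
    exact hmono _ _ (by rw [hmemE, hmemE]) ((F.orderEmbOfFin rfl).strictMono hy)
  have huniq := Finset.orderEmbOfFin_unique (rfl : F.card = F.card)
      (f := fun y => w (F.orderEmbOfFin rfl y)) hwE hsm
  obtain ⟨y, hy⟩ : ∃ y, F.orderEmbOfFin rfl y = x := by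
    have : x ∈ Set.range (F.orderEmbOfFin rfl) := by
      rw [Finset.range_orderEmbOfFin]; exact_mod_cast hxF
    exact this
  rw [← hy]
  exact congrFun huniq y

end SCAAux

section ExactCover

open Finset

lemma covers_eq_perm {t v : ℕ} (π : Equiv.Perm (Fin v)) {s : Fin t → Fin v}
    (hs : Function.Injective s) {σ τ : Equiv.Perm (Fin t)}
    (hσ : SeqCovers π (s ∘ σ)) (hτ : SeqCovers π (s ∘ τ)) : σ = τ := by
  have hinj : Function.Injective (π.symm ∘ s) := π.symm.injective.comp hs
  have hmσ : StrictMono ((π.symm ∘ s) ∘ σ) := fun i j hij => hσ i j hij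
  have hmτ : StrictMono ((π.symm ∘ s) ∘ τ) := fun i j hij => hτ i j hij
  have hcard : (Finset.univ.image (π.symm ∘ s)).card = t := by
    rw [Finset.card_image_of_injective _ hinj, Finset.card_univ, Fintype.card_fin]
  have h1 := Finset.orderEmbOfFin_unique hcard (f := (π.symm ∘ s) ∘ σ)
      (fun x => Finset.mem_image_of_mem _ (Finset.mem_univ _)) hmσ
  have h2 := Finset.orderEmbOfFin_unique hcard (f := (π.symm ∘ s) ∘ τ)
      (fun x => Finset.mem_image_of_mem _ (Finset.mem_univ _)) hmτ
  apply Equiv.ext; intro x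
  exact hinj (congrFun (h1.trans h2.symm) x)

lemma exact_cover {t v : ℕ} {X : Finset (Equiv.Perm (Fin v))}
    (hX : IsSCA (Nat.factorial t) t v X) {s : Fin t → Fin v} (hs : Function.Injective s) :
    (X.filter fun π => SeqCovers π s).card = 1 := by
  classical
  set f : Equiv.Perm (Fin t) → Finset (Equiv.Perm (Fin v)) :=
    fun σ => X.filter fun π => SeqCovers π (s ∘ σ) with hf
  have hdisj : ∀ σ ∈ (Finset.univ : Finset (Equiv.Perm (Fin t))), ∀ τ ∈ Finset.univ,
      σ ≠ τ → Disjoint (f σ) (f τ) := by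
    intro σ _ τ _ hne
    refine Finset.disjoint_left.2 fun π h1 h2 => hne ?_
    exact covers_eq_perm π hs (Finset.mem_filter.1 h1).2 (Finset.mem_filter.1 h2).2
  have hsub : Finset.univ.biUnion f ⊆ X := by
    intro π hπ
    rcases Finset.mem_biUnion.1 hπ with ⟨σ, _, h⟩
    exact (Finset.mem_filter.1 h).1
  have hle : ∑ σ : Equiv.Perm (Fin t), (f σ).card ≤ Nat.factorial t := by
    rw [← Finset.card_biUnion hdisj]
    exact (Finset.card_le_card hsub).trans_eq hX.1
  have hge : ∀ σ : Equiv.Perm (Fin t), 1 ≤ (f σ).card := by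
    intro σ
    obtain ⟨π, hπ, hcov⟩ := hX.2 (s ∘ σ) (hs.comp σ.injective)
    exact Finset.card_pos.2 ⟨π, Finset.mem_filter.2 ⟨hπ, hcov⟩⟩
  have hcardP : ∑ _σ : Equiv.Perm (Fin t), 1 = Nat.factorial t := by
    simp [Finset.card_univ, Fintype.card_perm, Fintype.card_fin]
  have heq : ∑ _σ : Equiv.Perm (Fin t), 1 = ∑ σ : Equiv.Perm (Fin t), (f σ).card :=
    le_antisymm (Finset.sum_le_sum fun σ _ => hge σ) (hle.trans_eq hcardP.symm)
  have hall := (Finset.sum_eq_sum_iff_of_le (fun σ _ => hge σ)).1 heq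
  have h1 : (f 1).card = 1 := (hall 1 (Finset.mem_univ _)).symm
  have hs1 : (fun π => SeqCovers π (s ∘ ⇑(1 : Equiv.Perm (Fin t)))) =
      fun π => SeqCovers π s := by
    funext π; rw [Equiv.Perm.coe_one, Function.comp_id]
  rw [hf] at h1
  simp only [hs1] at h1
  convert h1 using 2
end ExactCover

section Main

def skey (t : ℕ) {a m : ℕ} (ν : Fin m → Fin (a+1)) (g : Equiv.Perm (Fin m)) :
    Fin a ⊕ Fin m → ℕ
  | Sum.inl j => (j : ℕ) * (t+1) + t
  | Sum.inr i => (ν i : ℕ) * (t+1) + (g.symm i : ℕ)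

def KeyCov {v : ℕ} (t : ℕ) {a m : ℕ} (ν : Fin m → Fin (a+1))
    (val : Fin a ⊕ Fin m → Fin v) (g : Equiv.Perm (Fin m)) (π : Equiv.Perm (Fin v)) : Prop :=
  ∀ x y, skey t ν g x < skey t ν g y → π.symm (val x) < π.symm (val y)

instance {v t a m : ℕ} (ν : Fin m → Fin (a+1)) (val : Fin a ⊕ Fin m → Fin v)
    (g : Equiv.Perm (Fin m)) :
    DecidablePred fun π : Equiv.Perm (Fin v) => KeyCov t ν val g π := fun π => by
  unfold KeyCov; infer_instance

lemma keycov_card {v t a m : ℕ} (ham : a + m = t) {X : Finset (Equiv.Perm (Fin v))}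
    (hX : IsSCA (Nat.factorial t) t v X) (ν : Fin m → Fin (a+1)) {val : Fin a ⊕ Fin m → Fin v}
    (hval : Function.Injective val) (g : Equiv.Perm (Fin m))
    (hkeyinj : Function.Injective (skey t ν g)) :
    (X.filter fun π => KeyCov t ν val g π).card = 1 := by
  classical
  set q : (Fin a ⊕ Fin m) ≃ Fin t := finSumFinEquiv.trans (finCongr ham) with hq
  set σg : Equiv.Perm (Fin t) := Tuple.sort (skey t ν g ∘ q.symm) with hσg
  set sg : Fin t → Fin v := fun i => val (q.symm (σg i)) with hsg
  have hsg_inj : Function.Injective sg := by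
    rw [hsg]
    exact hval.comp (q.symm.injective.comp σg.injective)
  have hstrict : StrictMono ((skey t ν g ∘ q.symm) ∘ σg) := by
    rw [hσg]
    exact (Tuple.monotone_sort _).strictMono_of_injective
      ((hkeyinj.comp q.symm.injective).comp (Tuple.sort (skey t ν g ∘ q.symm)).injective)
  have hiff : ∀ π, SeqCovers π sg ↔ KeyCov t ν val g π := by
    intro π
    constructor
    · intro h x y hxy
      have hx : q.symm (σg (σg.symm (q x))) = x := by simp
      have hy : q.symm (σg (σg.symm (q y))) = y := by simp
      rw [← hx, ← hy] at hxy
      have hlt : σg.symm (q x) < σg.symm (q y) := hstrict.lt_iff_lt.1 hxy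
      have := h _ _ hlt
      rw [hsg] at this
      simp only at this
      rw [hx, hy] at this
      exact this
    · intro h i j hij
      exact h _ _ (hstrict hij)
  have hfe : (X.filter fun π => KeyCov t ν val g π) = X.filter fun π => SeqCovers π sg :=
    Finset.filter_congr fun π _ => (hiff π).symm
  rw [hfe]
  exact exact_cover hX hsg_inj

theorem constrArray_exact_coverage' (t v a : ℕ) (htv : t ≤ v) (ha0 : 0 < a) (hat : a < t)
    (X : Finset (Equiv.Perm (Fin v))) (hX : IsSCA (Nat.factorial t) t v X)
    (u : Fin a → Fin v) (hu : Function.Injective u)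
    (c : Fin (t - a) → {ν : Fin v // ∀ i, u i ≠ ν}) (hc : Function.Injective c)
    (ν : Fin (t - a) → Fin (a + 1)) :
    CoversCount (ConstrArray X u) c ν = mu ν := by
  classical
  have ham : a + (t - a) = t := Nat.add_sub_cancel' hat.le
  have hma : t - a ≤ t := Nat.sub_le t a
  have hv0 : 0 < v := lt_of_lt_of_le (lt_of_le_of_lt (Nat.zero_le a) hat) htv
  -- the merged valuation
  set val : Fin a ⊕ Fin (t - a) → Fin v := Sum.elim u (fun i => (c i).1) with hvaldef
  have hval : Function.Injective val := by
    rw [hvaldef]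
    rintro (j | i) (j' | i') h
    · exact congrArg Sum.inl (hu h)
    · exact absurd h ((c i').2 j)
    · exact absurd h.symm ((c i).2 j')
    · exact congrArg Sum.inr (hc (Subtype.ext h))
  have hval_inl : ∀ j : Fin a, val (Sum.inl j) = u j := fun j => rfl
  have hval_inr : ∀ i, val (Sum.inr i) = (c i).1 := fun i => rfl
  -- bounds
  have hgb : ∀ (g : Equiv.Perm (Fin (t-a))) (i : Fin (t-a)), (g.symm i : ℕ) < t :=
    fun g i => lt_of_lt_of_le (g.symm i).isLt hma
  have hνb : ∀ i, (ν i : ℕ) ≤ a := fun i => Nat.lt_succ_iff.1 (ν i).isLt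
  -- key comparison helpers
  have hk0 : ∀ (g : Equiv.Perm (Fin (t-a))) (j j' : Fin a), j < j' →
      skey t ν g (Sum.inl j) < skey t ν g (Sum.inl j') := by
    intro g j j' h
    exact SCAAux.block_lt_of (Nat.lt_succ_self t) h
  have hk1 : ∀ (g : Equiv.Perm (Fin (t-a))) (j : Fin a) (i : Fin (t-a)), (j : ℕ) < (ν i : ℕ) →
      skey t ν g (Sum.inl j) < skey t ν g (Sum.inr i) := by
    intro g j i h
    exact SCAAux.block_lt_of (Nat.lt_succ_self t) h
  have hk2 : ∀ (g : Equiv.Perm (Fin (t-a))) (j : Fin a) (i : Fin (t-a)), (ν i : ℕ) ≤ (j : ℕ) →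
      skey t ν g (Sum.inr i) < skey t ν g (Sum.inl j) := by
    intro g j i h
    rcases lt_or_eq_of_le h with h' | h'
    · exact SCAAux.block_lt_of (Nat.lt_succ_of_lt (hgb g i)) h'
    · exact (SCAAux.block_lt (Nat.lt_succ_of_lt (hgb g i)) (Nat.lt_succ_self t)).2
        (Or.inr ⟨h', hgb g i⟩)
  have hk3 : ∀ (g : Equiv.Perm (Fin (t-a))) (i i' : Fin (t-a)), ν i = ν i' →
      (g.symm i : ℕ) < (g.symm i' : ℕ) →
      skey t ν g (Sum.inr i) < skey t ν g (Sum.inr i') := by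
    intro g i i' hν h
    exact (SCAAux.block_lt (Nat.lt_succ_of_lt (hgb g i)) (Nat.lt_succ_of_lt (hgb g i'))).2
      (Or.inr ⟨by rw [hν], h⟩)
  -- injectivity of keys
  have hkeyinj : ∀ g : Equiv.Perm (Fin (t-a)), Function.Injective (skey t ν g) := by
    intro g x y h
    rcases x with j | i <;> rcases y with j' | i'
    · obtain ⟨h1, -⟩ := SCAAux.block_eq (Nat.lt_succ_self t) (Nat.lt_succ_self t) h
      exact congrArg Sum.inl (Fin.ext h1)
    · obtain ⟨-, h2⟩ := SCAAux.block_eq (Nat.lt_succ_self t) (Nat.lt_succ_of_lt (hgb g i')) h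
      exact absurd h2.symm (Nat.ne_of_lt (hgb g i'))
    · obtain ⟨-, h2⟩ := SCAAux.block_eq (Nat.lt_succ_of_lt (hgb g i)) (Nat.lt_succ_self t) h
      exact absurd h2 (Nat.ne_of_lt (hgb g i))
    · obtain ⟨-, h2⟩ := SCAAux.block_eq (Nat.lt_succ_of_lt (hgb g i))
        (Nat.lt_succ_of_lt (hgb g i')) h
      exact congrArg Sum.inr (g.symm.injective (Fin.ext h2))
  -- each KeyCov class has exactly one member of X
  have hcover_card : ∀ g : Equiv.Perm (Fin (t-a)),
      (X.filter fun π => KeyCov t ν val g π).card = 1 :=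
    fun g => keycov_card ham hX ν hval g (hkeyinj g)
  -- entries + covering u imply the two order relations
  have H12 : ∀ π : Equiv.Perm (Fin v), SeqCovers π u →
      (∀ i, ConstrEntry π u (c i).1 = ν i) →
      (∀ (j : Fin a) (i : Fin (t-a)), (j : ℕ) < (ν i : ℕ) → π.symm (u j) < π.symm ((c i).1)) ∧
      (∀ (j : Fin a) (i : Fin (t-a)), (ν i : ℕ) ≤ (j : ℕ) → π.symm ((c i).1) < π.symm (u j)) := by
    intro π hcov hent
    have hne : ∀ (j : Fin a) (i : Fin (t-a)), π.symm (u j) ≠ π.symm ((c i).1) :=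
      fun j i h => (c i).2 j (π.symm.injective h)
    have humono : ∀ j j' : Fin a, (j : ℕ) ≤ (j' : ℕ) → π.symm (u j) ≤ π.symm (u j') := by
      intro j j' h
      rcases eq_or_lt_of_le h with h' | h'
      · exact le_of_eq (by rw [Fin.ext h'])
      · exact le_of_lt (hcov j j' h')
    have hScard : ∀ i, (Finset.univ.filter fun j' : Fin a =>
        π.symm (u j') < π.symm ((c i).1)).card = (ν i : ℕ) :=
      fun i => congrArg Fin.val (hent i)
    constructor
    · intro j i hj
      by_contra hcon
      have hlt : π.symm ((c i).1) < π.symm (u j) :=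
        lt_of_le_of_ne (not_lt.1 hcon) fun h => hne j i h.symm
      have hsub : (Finset.univ.filter fun j' : Fin a => π.symm (u j') < π.symm ((c i).1)) ⊆
          Finset.univ.filter fun j' : Fin a => (j' : ℕ) < (j : ℕ) := by
        intro j' hj'
        rw [Finset.mem_filter] at hj' ⊢
        refine ⟨Finset.mem_univ _, ?_⟩
        by_contra hge
        exact absurd (lt_of_le_of_lt (humono j j' (not_lt.1 hge)) hj'.2) (asymm hlt)
      have hcard := Finset.card_le_card hsub
      rw [hScard i, SCAAux.card_filter_lt j.isLt.le] at hcard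
      omega
    · intro j i hj
      by_contra hcon
      have hlt : π.symm (u j) < π.symm ((c i).1) :=
        lt_of_le_of_ne (not_lt.1 hcon) (hne j i)
      have hsub : (Finset.univ.filter fun j' : Fin a => (j' : ℕ) < (j : ℕ) + 1) ⊆
          Finset.univ.filter fun j' : Fin a => π.symm (u j') < π.symm ((c i).1) := by
        intro j' hj'
        rw [Finset.mem_filter] at hj' ⊢
        exact ⟨Finset.mem_univ _,
          lt_of_le_of_lt (humono j' j (by omega : (j' : ℕ) ≤ (j : ℕ))) hlt⟩
      have hcard := Finset.card_le_card hsub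
      rw [hScard i, SCAAux.card_filter_lt (by omega : (j : ℕ) + 1 ≤ a)] at hcard
      omega
  -- KeyCov implies membership in the target
  have key_to_target : ∀ (g : Equiv.Perm (Fin (t-a))) (π : Equiv.Perm (Fin v)),
      KeyCov t ν val g π →
      SeqCovers π u ∧ ∀ i, ConstrEntry π u (c i).1 = ν i := by
    intro g π hkc
    have hcovu : SeqCovers π u := by
      intro i j hij
      have := hkc (Sum.inl i) (Sum.inl j) (hk0 g i j hij)
      rwa [hval_inl, hval_inl] at this
    refine ⟨hcovu, fun i => ?_⟩
    have hfeq : (Finset.univ.filter fun j : Fin a => π.symm (u j) < π.symm ((c i).1)) =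
        Finset.univ.filter fun j : Fin a => (j : ℕ) < (ν i : ℕ) := by
      ext j
      simp only [Finset.mem_filter, Finset.mem_univ, true_and]
      constructor
      · intro h
        by_contra hge
        have h2 := hkc (Sum.inr i) (Sum.inl j) (hk2 g j i (not_lt.1 hge))
        rw [hval_inl, hval_inr] at h2
        exact absurd h2 (asymm h)
      · intro h
        have h2 := hkc (Sum.inl j) (Sum.inr i) (hk1 g j i h)
        rwa [hval_inl, hval_inr] at h2
    apply Fin.ext
    show (Finset.univ.filter fun j : Fin a => π.symm (u j) < π.symm ((c i).1)).card = (ν i : ℕ)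
    rw [hfeq, SCAAux.card_filter_lt (hνb i)]
  -- target membership implies KeyCov for some fiber-preserving g
  have target_to_key : ∀ π : Equiv.Perm (Fin v), SeqCovers π u →
      (∀ i, ConstrEntry π u (c i).1 = ν i) →
      ∃ g : Equiv.Perm (Fin (t-a)), ν ∘ g = ν ∧ KeyCov t ν val g π := by
    intro π hcov hent
    obtain ⟨H1, H2⟩ := H12 π hcov hent
    set key2 : Fin (t-a) → ℕ := fun i => (ν i : ℕ) * v + (π.symm ((c i).1) : ℕ) with hkey2
    set key0 : Fin (t-a) → ℕ := fun i => (ν i : ℕ) * v + (i : ℕ) with hkey0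
    set σ1 : Equiv.Perm (Fin (t-a)) := Tuple.sort key2 with hσ1
    set σ0 : Equiv.Perm (Fin (t-a)) := Tuple.sort key0 with hσ0
    have hm1 : Monotone (key2 ∘ σ1) := by rw [hσ1]; exact Tuple.monotone_sort key2
    have hm0 : Monotone (key0 ∘ σ0) := by rw [hσ0]; exact Tuple.monotone_sort key0
    have hdiv2 : ∀ i, key2 i / v = (ν i : ℕ) := by
      intro i
      have h : key2 i = (π.symm ((c i).1) : ℕ) + v * (ν i : ℕ) := by rw [hkey2]; ring
      rw [h, Nat.add_mul_div_left _ _ hv0, Nat.div_eq_of_lt (Fin.is_lt _), Nat.zero_add]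
    have hdiv0 : ∀ i, key0 i / v = (ν i : ℕ) := by
      intro i
      have h : key0 i = (i : ℕ) + v * (ν i : ℕ) := by rw [hkey0]; ring
      rw [h, Nat.add_mul_div_left _ _ hv0,
        Nat.div_eq_of_lt (lt_of_lt_of_le i.isLt (le_trans hma htv)), Nat.zero_add]
    have hmono1 : Monotone (ν ∘ σ1) := by
      intro x y hxy
      show ν (σ1 x) ≤ ν (σ1 y)
      rw [Fin.le_def, ← hdiv2 (σ1 x), ← hdiv2 (σ1 y)]
      exact Nat.div_le_div_right (hm1 hxy)
    have hmono0 : Monotone (ν ∘ σ0) := by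
      intro x y hxy
      show ν (σ0 x) ≤ ν (σ0 y)
      rw [Fin.le_def, ← hdiv0 (σ0 x), ← hdiv0 (σ0 y)]
      exact Nat.div_le_div_right (hm0 hxy)
    have hν10 : ν ∘ σ1 = ν ∘ σ0 := Tuple.unique_monotone hmono1 hmono0
    set g : Equiv.Perm (Fin (t-a)) := σ0.symm.trans σ1 with hg
    have hgsymm : ∀ i, g.symm i = σ0 (σ1.symm i) := by intro i; rw [hg]; rfl
    have hgν : ν ∘ g = ν := by
      funext x
      have h1 := congrFun hν10 (σ0.symm x)
      simp only [Function.comp_apply] at h1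
      show ν (g x) = ν x
      rw [hg]
      show ν (σ1 (σ0.symm x)) = ν x
      rw [h1, Equiv.apply_symm_apply]
    refine ⟨g, hgν, ?_⟩
    intro x y hxy
    rcases x with j | i <;> rcases y with j' | i'
    · have h := (SCAAux.block_lt (Nat.lt_succ_self t) (Nat.lt_succ_self t)).1 hxy
      rw [hval_inl, hval_inl]
      rcases h with h | ⟨-, h⟩
      · exact hcov j j' h
      · exact absurd h (lt_irrefl t)
    · have h := (SCAAux.block_lt (Nat.lt_succ_self t) (Nat.lt_succ_of_lt (hgb g i'))).1 hxy
      rw [hval_inl, hval_inr]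
      rcases h with h | ⟨-, h⟩
      · exact H1 j i' h
      · exact absurd h (Nat.lt_asymm (hgb g i'))
    · have h := (SCAAux.block_lt (Nat.lt_succ_of_lt (hgb g i)) (Nat.lt_succ_self t)).1 hxy
      rw [hval_inl, hval_inr]
      have hle : (ν i : ℕ) ≤ (j' : ℕ) := by
        rcases h with h | ⟨h, -⟩
        · exact h.le
        · exact h.le
      exact H2 j' i hle
    · have h := (SCAAux.block_lt (Nat.lt_succ_of_lt (hgb g i))
        (Nat.lt_succ_of_lt (hgb g i'))).1 hxy
      rw [hval_inr, hval_inr]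
      rcases h with hlt | ⟨heq, hlt⟩
      · have hja : (ν i : ℕ) < a := lt_of_lt_of_le hlt (hνb i')
        exact lt_trans (H2 ⟨(ν i : ℕ), hja⟩ i (le_refl _)) (H1 ⟨(ν i : ℕ), hja⟩ i' hlt)
      · -- same fiber: use the two sorts
        have hνii' : ν i = ν i' := Fin.ext heq
        have hne_ii' : i ≠ i' := by
          intro h; rw [h] at hlt; exact lt_irrefl _ hlt
        rw [hgsymm i, hgsymm i'] at hlt
        have hip : σ1 (σ1.symm i) = i := Equiv.apply_symm_apply σ1 i
        have hip' : σ1 (σ1.symm i') = i' := Equiv.apply_symm_apply σ1 i'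
        have hν0pp' : ν (σ0 (σ1.symm i)) = ν (σ0 (σ1.symm i')) := by
          have e1 := congrFun hν10 (σ1.symm i)
          have e2 := congrFun hν10 (σ1.symm i')
          simp only [Function.comp_apply] at e1 e2
          rw [← e1, ← e2, hip, hip']
          exact hνii'
        have hne_pp' : σ1.symm i ≠ σ1.symm i' := by
          intro h
          exact hne_ii' (by rw [← hip, ← hip', h])
        have hpp' : σ1.symm i < σ1.symm i' := by
          rcases lt_trichotomy (σ1.symm i) (σ1.symm i') with h | h | h
          · exact h
          · exact absurd h hne_pp'
          · exfalso
            have h2 := hm0 h.le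
            simp only [hkey0, Function.comp_apply] at h2
            have hval0 : (ν (σ0 (σ1.symm i')) : ℕ) = (ν (σ0 (σ1.symm i)) : ℕ) :=
              congrArg Fin.val hν0pp'.symm
            rw [hval0] at h2
            have h3 := Nat.le_of_add_le_add_left h2
            exact absurd hlt (not_lt.2 h3)
        have h2 := hm1 hpp'.le
        simp only [hkey2, Function.comp_apply] at h2
        rw [hip, hip'] at h2
        rw [heq] at h2
        have h3 : (π.symm ((c i).1) : ℕ) ≤ (π.symm ((c i').1) : ℕ) :=
          Nat.le_of_add_le_add_left h2
        have hne2 : π.symm ((c i).1) ≠ π.symm ((c i').1) :=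
          fun h => hne_ii' (hc (Subtype.ext (π.symm.injective h)))
        exact lt_of_le_of_ne h3 hne2
  -- distinct fiber-preserving g's have disjoint KeyCov classes
  have key_disjoint : ∀ g g' : Equiv.Perm (Fin (t-a)), ν ∘ g = ν → ν ∘ g' = ν →
      ∀ π : Equiv.Perm (Fin v), KeyCov t ν val g π → KeyCov t ν val g' π → g = g' := by
    intro g g' hgν hg'ν π hkc hkc'
    have hgν' : ∀ x, ν (g x) = ν x := fun x => congrFun hgν x
    have hg'ν' : ∀ x, ν (g' x) = ν x := fun x => congrFun hg'ν x
    have korder : ∀ gg : Equiv.Perm (Fin (t-a)), KeyCov t ν val gg π →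
        ∀ i i', ν i = ν i' → ((gg.symm i : ℕ) < (gg.symm i' : ℕ) ↔
          π.symm ((c i).1) < π.symm ((c i').1)) := by
      intro gg hkcg i i' hνe
      constructor
      · intro h
        have h2 := hkcg (Sum.inr i) (Sum.inr i') (hk3 gg i i' hνe h)
        rwa [hval_inr, hval_inr] at h2
      · intro h
        by_contra hge
        rcases lt_or_eq_of_le (not_lt.1 hge) with h' | h'
        · have h2 := hkcg (Sum.inr i') (Sum.inr i) (hk3 gg i' i hνe.symm h')
          rw [hval_inr, hval_inr] at h2
          exact absurd h (asymm h2)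
        · have h2 : i' = i := gg.symm.injective (Fin.ext h')
          rw [h2] at h
          exact lt_irrefl _ h
    have hwν : ∀ x, ν (g'.symm (g x)) = ν x := by
      intro x
      have h2 : ∀ y, ν (g'.symm y) = ν y := by
        intro y
        conv_rhs => rw [← Equiv.apply_symm_apply g' y]
        exact (hg'ν' (g'.symm y)).symm
      rw [h2, hgν' x]
    have hwmono : ∀ x y : Fin (t-a), ν x = ν y → x < y → g'.symm (g x) < g'.symm (g y) := by
      intro x y hνxy hxy
      have hνgg : ν (g x) = ν (g y) := by
        rw [hgν' x, hgν' y]; exact hνxy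
      have h1 : (g.symm (g x) : ℕ) < (g.symm (g y) : ℕ) := by
        simp only [Equiv.symm_apply_apply]; exact hxy
      have h2 := (korder g hkc _ _ hνgg).1 h1
      exact (korder g' hkc' _ _ hνgg).2 h2
    have hw := SCAAux.mono_fiber_id ν (fun x => g'.symm (g x)) hwν hwmono
    apply Equiv.ext
    intro x
    exact (Equiv.symm_apply_eq g').1 (hw x)
  -- assemble
  have hCC : CoversCount (ConstrArray X u) c ν =
      (X.filter fun π => SeqCovers π u ∧ ∀ i, ConstrEntry π u (c i).1 = ν i).card := by
    rw [CoversCount, ConstrArray, Multiset.countP_map, Finset.card_def, Finset.filter_val,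
      Finset.filter_val, Multiset.filter_filter]
    congr 1
    apply Multiset.filter_congr
    intro π _
    constructor
    · rintro ⟨h1, h2⟩; exact ⟨h2, h1⟩
    · rintro ⟨h1, h2⟩; exact ⟨h2, h1⟩
  set G : Finset (Equiv.Perm (Fin (t-a))) :=
    Finset.univ.filter (fun g : Equiv.Perm (Fin (t-a)) => ν ∘ g = ν) with hG
  have hTG : (X.filter fun π => SeqCovers π u ∧ ∀ i, ConstrEntry π u (c i).1 = ν i) =
      G.biUnion fun g => X.filter fun π => KeyCov t ν val g π := by
    ext π
    simp only [hG, Finset.mem_biUnion, Finset.mem_filter, Finset.mem_univ, true_and]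
    constructor
    · rintro ⟨hπX, hcov, hent⟩
      obtain ⟨g, hgν, hkc⟩ := target_to_key π hcov hent
      exact ⟨g, hgν, hπX, hkc⟩
    · rintro ⟨g, hgν, hπX, hkc⟩
      exact ⟨hπX, key_to_target g π hkc⟩
  have hdisj2 : ∀ g ∈ G, ∀ g' ∈ G, g ≠ g' →
      Disjoint (X.filter fun π => KeyCov t ν val g π)
        (X.filter fun π => KeyCov t ν val g' π) := by
    intro g hg g' hg' hne
    refine Finset.disjoint_left.2 fun π h1 h2 => hne ?_
    rw [hG, Finset.mem_filter] at hg hg'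
    exact key_disjoint g g' hg.2 hg'.2 π (Finset.mem_filter.1 h1).2 (Finset.mem_filter.1 h2).2
  rw [hCC, hTG, Finset.card_biUnion hdisj2]
  rw [Finset.sum_congr rfl (fun g _ => hcover_card g), Finset.sum_const, smul_eq_mul, mul_one]
  have hGcard : G.card = Fintype.card {g : Equiv.Perm (Fin (t-a)) // ν ∘ g = ν} := by
    rw [hG]
    exact (Fintype.card_subtype _).symm
  rw [hGcard, DomMulAct.stabilizer_card, mu]
  apply Finset.prod_congr rfl
  intro σ _
  rw [Fintype.card_subtype]

end Main
/-- If `X` is an SCA(t!; t, v) and `0 < a < t`, then in every array of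
`C_a(X)` each `(t−a)`-way interaction `T` is covered by exactly `μ(T)` rows. -/
theorem constrArray_exact_coverage (t v a : ℕ) (htv : t ≤ v) (ha0 : 0 < a) (hat : a < t)
    (X : Finset (Equiv.Perm (Fin v))) (hX : IsSCA (Nat.factorial t) t v X)
    (u : Fin a → Fin v) (hu : Function.Injective u)
    (c : Fin (t - a) → {ν : Fin v // ∀ i, u i ≠ ν}) (hc : Function.Injective c)
    (ν : Fin (t - a) → Fin (a + 1)) :
    CoversCount (ConstrArray X u) c ν = mu ν := by
  exact constrArray_exact_coverage' t v a htv ha0 hat X hX u hu c hc ν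
end

section
/- Let X be an SCA(t!; t, v), let 0 < a < t, and let m_0, …, m_a be non-negative integers summing to v − a. Then, summed over all the arrays in C_a(X), there are exactly t! rows whose multiplicity vector is (m_0, …, m_a). -/
/-!
Fix a permutation `π`. A sequence `u` covered by `π` is the same thing as a strictly increasing
position vector `s = π⁻¹ ∘ u : Fin a → Fin v`, and the row of `π` in the array of `u` has
multiplicity vector the gap vector of `s`: symbol `k` occupies exactly the positions strictly
between `s (k-1)` and `s k`. Summing gaps gives `s k = k + m 0 + ⋯ + m k`, so every
composition `m` of `v - a` into `a + 1` parts is the gap vector of exactly one `s`. Hence each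
permutation of `X` contributes exactly one row with multiplicity vector `m`, and double
counting gives `|X| = t!` such rows.
-/

open Finset

namespace SeqCoveringArray

variable {v a : ℕ} (s : Fin a → Fin v)

def numBelow (n : Fin v) : ℕ := #{i | s i < n}

def gapCount (k : ℕ) : ℕ := #{n | n ∉ Set.range s ∧ numBelow s n = k}

variable {s}

lemma numBelow_apply (hs : StrictMono s) (k : Fin a) : numBelow s (s k) = k := by
  simp [numBelow, hs.lt_iff_lt, filter_gt_eq_Iio]

lemma numBelow_le_iff (hs : StrictMono s) (k : Fin a) (n : Fin v) :
    numBelow s n ≤ k ↔ n ≤ s k := by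
  constructor
  · intro h
    by_contra! hlt
    have hsub : Iic k ⊆ ({i | s i < n} : Finset _) := fun i hi =>
      mem_filter.2 ⟨mem_univ _, (hs.monotone (mem_Iic.1 hi)).trans_lt hlt⟩
    have hcard := card_le_card hsub
    rw [Fin.card_Iic] at hcard
    exact Nat.not_succ_le_self _ (hcard.trans h)
  · intro h
    rw [← numBelow_apply hs k]
    exact card_le_card (monotone_filter_right _ fun i _ (hi : s i < n) => hi.trans_le h)

lemma sum_gapCount_range (k : ℕ) :
    ∑ j ∈ range (k + 1), gapCount s j = #{n | n ∉ Set.range s ∧ numBelow s n ≤ k} := by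
  rw [card_eq_sum_card_fiberwise (f := numBelow s) (t := range (k + 1))
    fun n hn => mem_range_succ_iff.2 (mem_filter.1 hn).2.2]
  refine sum_congr rfl fun j hj => ?_
  rw [gapCount, filter_filter]
  refine congrArg card (filter_congr fun n _ => ?_)
  have := mem_range_succ_iff.1 hj
  constructor
  · rintro ⟨h1, h2⟩; exact ⟨⟨h1, h2 ▸ this⟩, h2⟩
  · rintro ⟨⟨h1, -⟩, h2⟩; exact ⟨h1, h2⟩

lemma sum_gapCount_add (hs : StrictMono s) (k : Fin a) :
    ∑ j ∈ range (k + 1), gapCount s j + k = s k := by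
  have hbelow : ({n | n ∉ Set.range s ∧ numBelow s n ≤ k} : Finset _)
      = {n ∈ Iio (s k) | n ∉ Set.range s} := by
    ext n
    simp only [mem_filter, mem_univ, true_and, mem_Iio, numBelow_le_iff hs]
    constructor
    · rintro ⟨hn, hle⟩; exact ⟨hle.lt_of_ne fun h => hn ⟨k, h.symm⟩, hn⟩
    · rintro ⟨hlt, hn⟩; exact ⟨hn, hlt.le⟩
  have hrange : {n ∈ Iio (s k) | n ∈ Set.range s} = (Iio k).map ⟨s, hs.injective⟩ := by
    ext n
    simp only [mem_filter, mem_Iio, Set.mem_range, mem_map, Function.Embedding.coeFn_mk]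
    constructor
    · rintro ⟨hlt, i, rfl⟩; exact ⟨i, hs.lt_iff_lt.1 hlt, rfl⟩
    · rintro ⟨i, hi, rfl⟩; exact ⟨hs hi, i, rfl⟩
  have hsplit := card_filter_add_card_filter_not (s := Iio (s k)) (· ∈ Set.range s)
  rw [hrange, card_map, Fin.card_Iio, Fin.card_Iio] at hsplit
  rw [sum_gapCount_range, hbelow]
  omega

lemma sum_gapCount_add_card (hs : Function.Injective s) :
    ∑ j ∈ range (a + 1), gapCount s j + a = v := by
  have hle : ∀ n, numBelow s n ≤ a := fun n =>
    (card_filter_le _ _).trans (by simp)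
  have hsplit := card_filter_add_card_filter_not (s := (univ : Finset (Fin v))) (· ∈ Set.range s)
  have hrange : ({n | n ∈ Set.range s} : Finset _) = univ.map ⟨s, hs⟩ := by
    ext n; simp
  rw [hrange, card_map, card_univ, card_univ, Fintype.card_fin, Fintype.card_fin] at hsplit
  rw [sum_gapCount_range]
  simp only [hle, and_true]
  omega

lemma eq_of_sum_range_succ_eq {f g : ℕ → ℕ} {N : ℕ}
    (h : ∀ k ≤ N, ∑ j ∈ range (k + 1), f j = ∑ j ∈ range (k + 1), g j) :
    ∀ k ≤ N, f k = g k
  | 0, _ => by simpa using h 0 (Nat.zero_le _)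
  | k + 1, hk => by
    have h₁ := h (k + 1) hk
    rw [sum_range_succ f, sum_range_succ g, h k (by omega)] at h₁
    exact Nat.add_left_cancel h₁

variable (m : ℕ → ℕ) (hm : ∑ j ∈ range (a + 1), m j + a = v)

def positionsOfGaps : Fin a → Fin v := fun k =>
  ⟨∑ j ∈ range (k + 1), m j + k, by
    have := sum_le_sum_of_subset (f := m)
      (range_subset_range.2 (by omega : (k : ℕ) + 1 ≤ a + 1))
    omega⟩

lemma strictMono_positionsOfGaps : StrictMono (positionsOfGaps m hm) := by
  intro i j hij
  have := sum_le_sum_of_subset (f := m) (range_subset_range.2 (by omega : (i : ℕ) + 1 ≤ j + 1))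
  simp only [positionsOfGaps, Fin.mk_lt_mk]
  omega

lemma eq_positionsOfGaps_iff {s : Fin a → Fin v} (hs : StrictMono s) :
    s = positionsOfGaps m hm ↔ ∀ k ≤ a, gapCount s k = m k := by
  constructor
  · rintro rfl
    refine eq_of_sum_range_succ_eq fun k hk => ?_
    obtain hk | rfl := hk.lt_or_eq
    · have := sum_gapCount_add hs ⟨k, hk⟩
      simp only [positionsOfGaps, Fin.val_mk] at this
      omega
    · have := sum_gapCount_add_card hs.injective
      omega
  · intro h
    funext k
    have := sum_gapCount_add hs k
    rw [sum_congr rfl fun j hj => h j (by have := mem_range.1 hj; omega)] at this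
    exact Fin.ext this.symm

lemma seqCovers_iff_strictMono {t : ℕ} (π : Equiv.Perm (Fin v)) (u : Fin t → Fin v) :
    SeqCovers π u ↔ StrictMono (π.symm ∘ u) := Iff.rfl

lemma card_constrEntry_eq (π : Equiv.Perm (Fin v)) (u : Fin a → Fin v) (k : Fin (a + 1)) :
    #{νc : {ν : Fin v // ∀ i, u i ≠ ν} | ConstrEntry π u νc.1 = k}
      = gapCount (π.symm ∘ u) k := by
  refine card_nbij (fun νc => π.symm νc.1) (fun νc h => ?_) (fun _ _ _ _ h => ?_) fun n h => ?_
  · refine mem_filter.2 ⟨mem_univ _, ?_, congrArg Fin.val (mem_filter.1 h).2⟩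
    rintro ⟨i, hi⟩
    exact νc.2 i (π.symm.injective hi)
  · exact Subtype.ext (π.symm.injective h)
  · obtain ⟨-, hn, hk⟩ := mem_filter.1 h
    refine ⟨⟨π n, fun i hi => hn ⟨i, by simp [hi]⟩⟩,
      mem_filter.2 ⟨mem_univ _, Fin.ext ?_⟩, by simp⟩
    simpa [ConstrEntry, numBelow] using hk

lemma countP_constrArray (X : Finset (Equiv.Perm (Fin v))) (u : Fin a → Fin v)
    (p : ({ν : Fin v // ∀ i, u i ≠ ν} → Fin (a + 1)) → Prop) [DecidablePred p] :
    (ConstrArray X u).countP p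
      = #{π ∈ X | (p fun νc => ConstrEntry π u νc.1) ∧ SeqCovers π u} := by
  rw [ConstrArray, Multiset.countP_map, Finset.filter_val, Multiset.filter_filter]
  rfl

lemma card_seqCovers_rowMultiplicities_eq_one (π : Equiv.Perm (Fin v))
    (m : Fin (a + 1) → ℕ) (hm : ∑ i, m i + a = v) :
    #{u : Fin a → Fin v | Function.Injective u ∧
      (∀ k, #{νc : {ν : Fin v // ∀ i, u i ≠ ν} | ConstrEntry π u νc.1 = k} = m k) ∧
      SeqCovers π u} = 1 := by
  set m' : ℕ → ℕ := fun j => if h : j ≤ a then m ⟨j, Nat.lt_succ_of_le h⟩ else 0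
  have hm' : ∑ j ∈ range (a + 1), m' j + a = v := by
    rw [← Fin.sum_univ_eq_sum_range]
    simpa [m', Fin.is_le] using hm
  have hgaps (s : Fin a → Fin v) :
      (∀ k : Fin (a + 1), gapCount s k = m k) ↔ ∀ k ≤ a, gapCount s k = m' k :=
    ⟨fun h k hk => by simpa [m', hk] using h ⟨k, by omega⟩,
      fun h k => by simpa [m', Fin.is_le] using h k (by omega)⟩
  refine card_eq_one.2 ⟨π ∘ positionsOfGaps m' hm', ?_⟩
  ext u
  simp only [mem_filter, mem_univ, true_and, mem_singleton, card_constrEntry_eq,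
    seqCovers_iff_strictMono, hgaps, ← Equiv.symm_comp_eq]
  constructor
  · rintro ⟨-, hgap, hs⟩
    exact (eq_positionsOfGaps_iff m' hm' hs).2 hgap
  · intro hu
    have hs : StrictMono (π.symm ∘ u) := hu ▸ strictMono_positionsOfGaps m' hm'
    exact ⟨hs.injective.of_comp, (eq_positionsOfGaps_iff m' hm' hs).1 hu, hs⟩

end SeqCoveringArray

open SeqCoveringArray

theorem constrArray_multiplicity_vectors_general (t v a : ℕ) (htv : t ≤ v)
    (hat : a < t)
    (X : Finset (Equiv.Perm (Fin v))) (hX : IsSCA (Nat.factorial t) t v X)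
    (m : Fin (a + 1) → ℕ) (hm : ∑ i, m i = v - a) :
    ∑ u ∈ Finset.univ.filter (fun u : Fin a → Fin v => Function.Injective u),
      Multiset.countP
        (fun ρ : {ν : Fin v // ∀ i, u i ≠ ν} → Fin (a + 1) =>
          ∀ i : Fin (a + 1), (Finset.univ.filter fun νc => ρ νc = i).card = m i)
        (ConstrArray X u)
      = Nat.factorial t := by
  let contributes (u : Fin a → Fin v) (π : Equiv.Perm (Fin v)) : Prop :=
    (∀ k, #{νc : {ν : Fin v // ∀ i, u i ≠ ν} | ConstrEntry π u νc.1 = k} = m k) ∧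
      SeqCovers π u
  have hm' : ∑ i, m i + a = v := by omega
  let injFuns : Finset (Fin a → Fin v) := {u | Function.Injective u}
  calc _ = ∑ u ∈ injFuns, #(X.bipartiteAbove contributes u) := by
        simp only [countP_constrArray, bipartiteAbove, contributes, injFuns]
    _ = ∑ π ∈ X, #(injFuns.bipartiteBelow contributes π) :=
        sum_card_bipartiteAbove_eq_sum_card_bipartiteBelow contributes
    _ = ∑ π ∈ X, 1 := by
        refine sum_congr rfl fun π _ => ?_
        rw [bipartiteBelow, filter_filter]
        exact card_seqCovers_rowMultiplicities_eq_one π m hm'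
    _ = t.factorial := by rw [sum_const, smul_eq_mul, mul_one, hX.1]

/-- If `X` is an SCA(t!; t, v), `0 < a < t`, and `m_0, …, m_a` are
non-negative integers summing to `v − a`, then across all arrays in `C_a(X)` there are
exactly `t!` rows with multiplicity vector `(m_0, …, m_a)` (the row `ρ` has multiplicity
vector `m` if each symbol `i` appears exactly `m i` times in `ρ`). -/
theorem constrArray_multiplicity_vectors (t v a : ℕ) (htv : t ≤ v)
    (ha0 : 0 < a) (hat : a < t)
    (X : Finset (Equiv.Perm (Fin v))) (hX : IsSCA (Nat.factorial t) t v X)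
    (m : Fin (a + 1) → ℕ) (hm : ∑ i, m i = v - a) :
    ∑ u ∈ Finset.univ.filter (fun u : Fin a → Fin v => Function.Injective u),
      Multiset.countP
        (fun ρ : {ν : Fin v // ∀ i, u i ≠ ν} → Fin (a + 1) =>
          ∀ i : Fin (a + 1), (Finset.univ.filter fun νc => ρ νc = i).card = m i)
        (ConstrArray X u)
      = Nat.factorial t :=
  constrArray_multiplicity_vectors_general t v a htv hat X hX m hm
end

section
/- Let v, t and a be integers with v ≥ t ≥ 3 and 0 < a < t. Then SCAN(t, v) ≥ a! · CAN_X(t − a, v − a, a + 1), where SCAN(t, v) is the minimum N such that an SCA(N; t, v) exists and CAN_X(t', k, w) is the minimum N such that a CA_X(N; t', k, w) exists. -/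
/-- `C` is a covering array CA(N; t, k, v): every `t`-way interaction is covered by at
least one row. -/
def IsCA (N t k v : ℕ) (C : Multiset (Fin k → Fin v)) : Prop :=
  Multiset.card C = N ∧
  ∀ c : Fin t → Fin k, Function.Injective c →
    ∀ ν : Fin t → Fin v, 1 ≤ CoversCount C c ν

/-- `CAN(t, k, v)`: the smallest `N` for which a CA(N; t, k, v) exists. -/
noncomputable def CAN (t k v : ℕ) : ℕ :=
  sInf {N | ∃ C : Multiset (Fin k → Fin v), IsCA N t k v C}

/-- `CAN_X(t, k, v)`: the smallest `N` for which a CA_X(N; t, k, v) exists. -/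
noncomputable def CANX (t k v : ℕ) : ℕ :=
  sInf {N | ∃ C : Multiset (Fin k → Fin v), IsCAX N t k v C}

/-- `SCAN(t, v)`: the smallest `N` for which an SCA(N; t, v) exists. -/
noncomputable def SCAN (t v : ℕ) : ℕ :=
  sInf {N | ∃ X : Finset (Equiv.Perm (Fin v)), IsSCA N t v X}

/-!
Split the permutations of an SCA(N; t, v) according to the order σ in which they list the last
`a` symbols, and record for each of the other `v - a` symbols how many of these `a` symbols come
before it. Each of the `a!` classes then gives a CA_X(t - a, v - a, a + 1): for an interaction
with columns `c` and symbols `ν`, each of the `μ(ν)` orderings of the columns sharing a symbol,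
interleaved with the special symbols in the order σ, is a sequence of `t` symbols; a permutation
covering it lies in the class σ and covers the interaction, and different orderings are covered
by different permutations.
-/

open Finset Function Equiv

theorem Equiv.Perm.eq_of_forall_lt_iff_lt {α β : Type*} [Finite α] [LinearOrder β] {f : α → β}
    (hf : Injective f) {e e' : Perm α} (h : ∀ x y, f (e x) < f (e y) ↔ f (e' x) < f (e' y)) :
    e = e' := by
  let _ : LinearOrder α := LinearOrder.lift' f hf
  have hmono : StrictMono (e.symm.trans e') := fun x y hxy =>
    (h (e.symm x) (e.symm y)).1 (by rwa [apply_symm_apply, apply_symm_apply])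
  have hrefl := Subsingleton.elim (hmono.orderIsoOfSurjective _ (Equiv.surjective _))
    (OrderIso.refl α)
  ext x
  simpa using (DFunLike.congr_fun hrefl (e x)).symm

theorem card_filter_perm_val_lt {a b : ℕ} (σ : Perm (Fin a)) (hb : b ≤ a) :
    #{m | (σ m : ℕ) < b} = b := by
  rw [card_equiv σ (t := {i : Fin a | (i : ℕ) < b}) (by simp), Fin.card_filter_val_lt,
    min_eq_right hb]

theorem exists_seqCovers {t v : ℕ} (htv : t ≤ v) {s : Fin t → Fin v} (hs : Injective s) :
    ∃ π : Perm (Fin v), SeqCovers π s := by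
  classical
  let e : Set.range (Fin.castLE htv) ≃ Set.range s :=
    (Equiv.ofInjective _ (Fin.castLE_injective htv)).symm.trans (Equiv.ofInjective s hs)
  refine ⟨e.extendSubtype, fun i j hij => ?_⟩
  have hext : ∀ i, e.extendSubtype (Fin.castLE htv i) = s i := fun i => by
    rw [extendSubtype_apply_of_mem e _ ⟨i, rfl⟩]
    simp [e]
  rwa [← hext i, ← hext j, symm_apply_apply, symm_apply_apply]

theorem isSCA_univ {t v : ℕ} (htv : t ≤ v) :
    IsSCA (Fintype.card (Perm (Fin v))) t v univ :=
  ⟨card_univ, fun _ hs => (exists_seqCovers htv hs).imp fun π hπ => ⟨mem_univ π, hπ⟩⟩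

theorem exists_isSCA_scan {t v : ℕ} (htv : t ≤ v) :
    ∃ X : Finset (Perm (Fin v)), IsSCA (SCAN t v) t v X :=
  Nat.sInf_mem (s := {N | ∃ X, IsSCA N t v X}) ⟨_, _, isSCA_univ htv⟩

theorem IsSCA.exists_mem_lt_iff_lt {N t v : ℕ} {X : Finset (Perm (Fin v))} (hX : IsSCA N t v X)
    {ι β : Type*} [Fintype ι] [LinearOrder β] (hι : Fintype.card ι = t) {g : ι → Fin v}
    (hg : Injective g) {K : ι → β} (hK : Injective K) :
    ∃ π ∈ X, ∀ x y, π.symm (g x) < π.symm (g y) ↔ K x < K y := by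
  let _ : LinearOrder ι := LinearOrder.lift' K hK
  let e := Fintype.orderIsoFinOfCardEq ι hι
  obtain ⟨π, hπX, hπ⟩ := hX.2 (g ∘ e) (hg.comp e.injective)
  have hmono : StrictMono fun i => π.symm (g (e i)) := fun i j => hπ i j
  refine ⟨π, hπX, fun x y => ?_⟩
  have := hmono.lt_iff_lt (a := e.symm x) (b := e.symm y)
  simp only [OrderIso.apply_symm_apply, OrderIso.lt_iff_lt] at this
  exact this

theorem mu_eq_card_stabilizer {n w : ℕ} (ν : Fin n → Fin w) :
    mu ν = Fintype.card {p : Perm (Fin n) // ν ∘ p = ν} := by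
  rw [DomMulAct.stabilizer_card, mu]
  exact prod_congr rfl fun b _ => by rw [Fintype.card_subtype]

theorem IsCAX.canx_le {N t k v : ℕ} {C : Multiset (Fin k → Fin v)} (h : IsCAX N t k v C) :
    CANX t k v ≤ N :=
  Nat.sInf_le ⟨C, h⟩

section LastSymbols

variable {k a n : ℕ}

-- The last `a` symbols `Fin.natAdd k m` of `Fin (k + a)` are the special ones; the first `k`
-- (`Fin.castAdd a j`) are the columns of the derived array.
def numSpecialsBefore (π : Perm (Fin (k + a))) (x : Fin (k + a)) : Fin (a + 1) :=
  ⟨#{m : Fin a | π.symm (Fin.natAdd k m) < π.symm x},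
    Nat.lt_succ_of_le ((card_filter_le _ _).trans (card_fin a).le)⟩

def specialsRow (π : Perm (Fin (k + a))) (j : Fin k) : Fin (a + 1) :=
  numSpecialsBefore π (Fin.castAdd a j)

def OrdersSpecials (σ : Perm (Fin a)) (π : Perm (Fin (k + a))) : Prop :=
  ∀ m m', π.symm (Fin.natAdd k m) < π.symm (Fin.natAdd k m') ↔ σ m < σ m'

instance (σ : Perm (Fin a)) : DecidablePred (OrdersSpecials (k := k) σ) := fun π => by
  unfold OrdersSpecials; infer_instance

theorem sum_card_filter_ordersSpecials_le (X : Finset (Perm (Fin (k + a)))) :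
    ∑ σ : Perm (Fin a), #(X.filter (OrdersSpecials σ)) ≤ #X := by
  rw [← card_biUnion]
  · exact card_le_card (biUnion_subset.2 fun σ _ => filter_subset _ _)
  · intro σ _ σ' _ hne
    exact disjoint_filter.2 fun π _ h h' => hne <|
      Perm.eq_of_forall_lt_iff_lt injective_id fun m m' => (h m m').symm.trans (h' m m')

def interactionSymbols (c : Fin n → Fin k) : Fin n ⊕ Fin a → Fin (k + a) :=
  Sum.elim (fun j => Fin.castAdd a (c j)) (Fin.natAdd k)

theorem interactionSymbols_injective {c : Fin n → Fin k} (hc : Injective c) :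
    Injective (interactionSymbols (a := a) c) := by
  rintro (j | m) (j' | m') h <;> simp only [interactionSymbols, Sum.elim_inl, Sum.elim_inr, Fin.ext_iff,
    Fin.val_castAdd, Fin.val_natAdd] at h
  · exact congrArg Sum.inl (hc (Fin.ext h))
  · omega
  · omega
  · exact congrArg Sum.inr (Fin.ext (by omega))

-- Sorting by this key puts special `m` in slot `2 σ m + 1` and column `j` in slot `2 ν j`,
-- columns sharing a symbol being ordered by `p`.
def interleavingKey (σ : Perm (Fin a)) (ν : Fin n → Fin (a + 1)) (p : Perm (Fin n)) :
    Fin n ⊕ Fin a → ℕ ×ₗ ℕ :=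
  Sum.elim (fun j => toLex (2 * (ν (p j) : ℕ), (p j : ℕ))) fun m => toLex (2 * (σ m : ℕ) + 1, 0)

theorem interleavingKey_injective (σ : Perm (Fin a)) (ν : Fin n → Fin (a + 1)) (p : Perm (Fin n)) :
    Injective (interleavingKey σ ν p) := by
  rintro (j | m) (j' | m') h <;> simp only [interleavingKey, Sum.elim_inl, Sum.elim_inr,
    toLex_inj, Prod.mk.injEq] at h
  · exact congrArg Sum.inl (p.injective (Fin.ext h.2))
  · omega
  · omega
  · exact congrArg Sum.inr (σ.injective (Fin.ext (by omega)))

def Interleaves (π : Perm (Fin (k + a))) (c : Fin n → Fin k) (σ : Perm (Fin a))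
    (ν : Fin n → Fin (a + 1)) (p : Perm (Fin n)) : Prop :=
  ∀ x y, π.symm (interactionSymbols c x) < π.symm (interactionSymbols c y) ↔
    interleavingKey σ ν p x < interleavingKey σ ν p y

variable {π : Perm (Fin (k + a))} {c : Fin n → Fin k} {σ : Perm (Fin a)} {ν : Fin n → Fin (a + 1)}
  {p p' : Perm (Fin n)}

theorem Interleaves.ordersSpecials (h : Interleaves π c σ ν p) : OrdersSpecials σ π := by
  intro m m'
  refine (h (.inr m) (.inr m')).trans ?_
  simp only [interleavingKey, Sum.elim_inr, Prod.Lex.toLex_lt_toLex, Fin.lt_def]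
  omega

theorem Interleaves.specialsRow_eq (h : Interleaves π c σ ν p) (hp : ν ∘ p = ν) (j : Fin n) :
    specialsRow π (c j) = ν j := by
  have hbefore : ∀ m, π.symm (Fin.natAdd k m) < π.symm (Fin.castAdd a (c j)) ↔
      (σ m : ℕ) < ν j := fun m => by
    refine (h (.inr m) (.inl j)).trans ?_
    rw [← congrFun hp j]
    simp only [interleavingKey, Sum.elim_inr, Sum.elim_inl, Prod.Lex.toLex_lt_toLex,
      Function.comp_apply]
    omega
  ext
  simp only [specialsRow, numSpecialsBefore, hbefore]
  exact card_filter_perm_val_lt σ (Nat.lt_succ_iff.1 (ν j).2)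

theorem Interleaves.perm_eq (h : Interleaves π c σ ν p) (h' : Interleaves π c σ ν p') :
    p = p' := by
  refine Perm.eq_of_forall_lt_iff_lt (f := fun i => toLex (2 * (ν i : ℕ), (i : ℕ)))
    (fun i i' hi => Fin.ext (Prod.ext_iff.1 (toLex_inj.1 hi)).2) fun j j' => ?_
  exact (h (.inl j) (.inl j')).symm.trans (h' (.inl j) (.inl j'))

theorem isCAX_filter_ordersSpecials {N t : ℕ} {X : Finset (Perm (Fin (k + a)))}
    (hX : IsSCA N t (k + a) X) (hat : a ≤ t) (σ : Perm (Fin a)) :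
    IsCAX #(X.filter (OrdersSpecials σ)) (t - a) k (a + 1)
      ((X.filter (OrdersSpecials σ)).val.map specialsRow) := by
  refine ⟨Multiset.card_map _ _, fun c hc ν => ?_⟩
  have hcard : Fintype.card (Fin (t - a) ⊕ Fin a) = t := by simp; omega
  choose P hPX hP using fun p : {p : Perm (Fin (t - a)) // ν ∘ p = ν} =>
    (hX.exists_mem_lt_iff_lt hcard (interactionSymbols_injective hc) (interleavingKey_injective σ ν p) :
      ∃ π ∈ X, Interleaves π c σ ν p)
  replace hP : ∀ p, Interleaves (P p) c σ ν p := hP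
  rw [mu_eq_card_stabilizer, CoversCount, Multiset.countP_map, ← filter_val, ← card_def,
    ← card_univ]
  refine card_le_card_of_injOn P (fun p _ => ?_) fun p _ p' _ hpp' =>
    Subtype.ext ((hP p).perm_eq (hpp' ▸ hP p'))
  simp [(hP p).ordersSpecials, (hP p).specialsRow_eq p.2, hPX]

end LastSymbols

theorem scan_ge_factorial_mul_canx_general (v t a : ℕ) (htv : t ≤ v) (hat : a < t) :
    Nat.factorial a * CANX (t - a) (v - a) (a + 1) ≤ SCAN t v := by
  obtain ⟨k, rfl⟩ : ∃ k, v = k + a := ⟨v - a, by omega⟩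
  obtain ⟨X, hX⟩ := exists_isSCA_scan htv
  rw [Nat.add_sub_cancel]
  calc a.factorial * CANX (t - a) k (a + 1) = ∑ _σ : Perm (Fin a), CANX (t - a) k (a + 1) := by
        simp [Fintype.card_perm]
    _ ≤ ∑ σ : Perm (Fin a), #(X.filter (OrdersSpecials σ)) :=
        sum_le_sum fun σ _ => (isCAX_filter_ordersSpecials hX hat.le σ).canx_le
    _ ≤ #X := sum_card_filter_ordersSpecials_le X
    _ = SCAN t (k + a) := hX.1

/-- For `v ≥ t ≥ 3` and `0 < a < t`,
`SCAN(t, v) ≥ a! · CAN_X(t − a, v − a, a + 1)`. -/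
theorem scan_ge_factorial_mul_canx (v t a : ℕ) (ht : 3 ≤ t) (htv : t ≤ v)
    (ha0 : 0 < a) (hat : a < t) :
    Nat.factorial a * CANX (t - a) (v - a) (a + 1) ≤ SCAN t v :=
  scan_ge_factorial_mul_canx_general v t a htv hat
end

section
/- For integers v, k ≥ 2, CAN(2, k, v) ≤ CAN_X(2, k, v) ≤ CAN(2, k, v) + v, where CAN(2, k, v) is the minimum N such that a covering array CA(N; 2, k, v) exists and CAN_X(2, k, v) is the minimum N such that an excess coverage array CA_X(N; 2, k, v) exists. -/
lemma mu_eq_two_cases {v : ℕ} (ν : Fin 2 → Fin v) : mu ν = if ν 0 = ν 1 then 2 else 1 := by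
  unfold mu
  have hcard : ∀ σ : Fin v, (Finset.univ.filter fun i => ν i = σ).card =
      (if ν 0 = σ then 1 else 0) + (if ν 1 = σ then 1 else 0) := by
    intro σ
    rw [Finset.card_filter, Fin.sum_univ_two]
  split_ifs with h
  · rw [Finset.prod_eq_single (ν 0)]
    · rw [hcard]; simp [h]
    · intro b _ hb
      rw [hcard]
      simp [Ne.symm hb, Ne.symm (h ▸ hb)]
    · simp
  · apply Finset.prod_eq_one
    intro σ _
    rw [hcard]
    rcases eq_or_ne (ν 0) σ with h0 | h0 <;> rcases eq_or_ne (ν 1) σ with h1 | h1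
    · exact absurd (h0.trans h1.symm) h
    all_goals simp [h0, h1, Nat.factorial]

lemma exists_CA_aux (v k : ℕ) (hv : 2 ≤ v) :
    ∃ N C, IsCA N 2 k v C := by
  haveI : NeZero v := ⟨by omega⟩
  refine ⟨v ^ k, (Finset.univ : Finset (Fin k → Fin v)).val, ?_, ?_⟩
  · simp [Finset.card_univ]
  · intro c hc ν
    rw [Nat.one_le_iff_ne_zero, ← Nat.pos_iff_ne_zero, CoversCount, Multiset.countP_pos]
    classical
    refine ⟨fun j => if j = c 0 then ν 0 else if j = c 1 then ν 1 else 0, by simp, ?_⟩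
    intro i
    fin_cases i
    · simp
    · have : c 1 ≠ c 0 := fun h => by simpa using hc h
      simp [this]

/-- For `v, k ≥ 2`, `CAN(2,k,v) ≤ CAN_X(2,k,v) ≤ CAN(2,k,v) + v`. -/
theorem canx_between_can_and_can_add_v (v k : ℕ) (hv : 2 ≤ v) (hk : 2 ≤ k) :
    CAN 2 k v ≤ CANX 2 k v ∧ CANX 2 k v ≤ CAN 2 k v + v := by
  classical
  set SCA : Set ℕ := {N | ∃ C : Multiset (Fin k → Fin v), IsCA N 2 k v C} with hSCA
  set SCAX : Set ℕ := {N | ∃ C : Multiset (Fin k → Fin v), IsCAX N 2 k v C} with hSCAX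
  have hne : SCA.Nonempty := by
    obtain ⟨N, C, h⟩ := exists_CA_aux v k hv
    exact ⟨N, C, h⟩
  obtain ⟨C, hCcard, hCcov⟩ := Nat.sInf_mem hne
  set D : Multiset (Fin k → Fin v) :=
    C + Multiset.map (fun σ (_ : Fin k) => σ) (Finset.univ.val : Multiset (Fin v)) with hD
  have hDcax : IsCAX (sInf SCA + v) 2 k v D := by
    constructor
    · simp [hD, hCcard]
    · intro c hc ν
      have hsplit : CoversCount D c ν = CoversCount C c ν +
          Multiset.countP (fun ρ => ∀ i, ρ (c i) = ν i)
            (Multiset.map (fun σ (_ : Fin k) => σ) (Finset.univ.val : Multiset (Fin v))) := by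
        simp [CoversCount, hD, Multiset.countP_add]
      have hmu : mu ν = if ν 0 = ν 1 then 2 else 1 := mu_eq_two_cases ν
      rcases eq_or_ne (ν 0) (ν 1) with h01 | h01
      · have h1 : 1 ≤ CoversCount C c ν := hCcov c hc ν
        have h2 : 1 ≤ Multiset.countP (fun ρ => ∀ i, ρ (c i) = ν i)
            (Multiset.map (fun σ (_ : Fin k) => σ) (Finset.univ.val : Multiset (Fin v))) := by
          rw [Nat.one_le_iff_ne_zero, ← Nat.pos_iff_ne_zero, Multiset.countP_pos]
          refine ⟨fun _ => ν 0, ?_, ?_⟩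
          · exact Multiset.mem_map.2 ⟨ν 0, by simp, rfl⟩
          · intro i; fin_cases i <;> simp [h01]
        rw [hmu, if_pos h01, hsplit]
        exact Nat.add_le_add h1 h2
      · rw [hmu, if_neg h01, hsplit]
        exact (hCcov c hc ν).trans (Nat.le_add_right _ _)
  have hle2 : sInf SCAX ≤ sInf SCA + v := Nat.sInf_le ⟨D, hDcax⟩
  have hnex : SCAX.Nonempty := ⟨_, D, hDcax⟩
  obtain ⟨E, hEcard, hEcov⟩ := Nat.sInf_mem hnex
  have hle1 : sInf SCA ≤ sInf SCAX := by
    apply Nat.sInf_le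
    refine ⟨E, hEcard, fun c hc ν => ?_⟩
    have := hEcov c hc ν
    rw [mu_eq_two_cases ν] at this
    split_ifs at this <;> omega
  exact ⟨hle1, hle2⟩
end

section
/- A CA_X(v(v+1); 2, k, v) contains a subarray (a submultiset of its rows) that forms an OA(2, k, v) if and only if it contains, for each symbol σ ∈ [v], a constant row all of whose entries equal σ. -/
/-- `C` is a (strength 2) orthogonal array OA(2, k, v): a `v² × k` array over `[v]` in
which every 2-way interaction is covered by exactly one row. -/
def IsOA2 (k v : ℕ) (C : Multiset (Fin k → Fin v)) : Prop :=
  Multiset.card C = v ^ 2 ∧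
  ∀ c : Fin 2 → Fin k, Function.Injective c →
    ∀ ν : Fin 2 → Fin v, CoversCount C c ν = 1

-- helper lemmas, test compile
lemma countP_imp' {α : Type*} (p q : α → Prop) [DecidablePred p] [DecidablePred q]
    (s : Multiset α) (h : ∀ a, p a → q a) : s.countP p ≤ s.countP q := by
  induction s using Multiset.induction_on with
  | empty => simp
  | cons a s ih =>
    rw [Multiset.countP_cons, Multiset.countP_cons]
    by_cases hp : p a
    · simp [hp, h a hp]; omega
    · simp [hp]; omega

lemma sum_countP_eq' {α β : Type*} [Fintype β] [DecidableEq β] (f : α → β) (s : Multiset α) :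
    ∑ b : β, s.countP (fun a => f a = b) = Multiset.card s := by
  induction s using Multiset.induction_on with
  | empty => simp
  | cons a s ih =>
    simp only [Multiset.countP_cons, Finset.sum_add_distrib, ih, Multiset.card_cons]
    congr 1
    simp

lemma coversCount_eq' {κ : Type} {w t : ℕ} (C : Multiset (κ → Fin w)) (c : Fin t → κ)
    (ν : Fin t → Fin w) :
    CoversCount C c ν = C.countP (fun ρ => (fun i => ρ (c i)) = ν) := by
  unfold CoversCount
  apply Multiset.countP_congr rfl
  intro ρ _
  simp [funext_iff]

lemma all_eq_one' {β : Type*} [Fintype β] (g : β → ℕ) (h1 : ∀ b, 1 ≤ g b)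
    (hsum : ∑ b : β, g b = Fintype.card β) : ∀ b, g b = 1 := by
  have := (Finset.sum_eq_sum_iff_of_le (s := Finset.univ) (f := fun _ => 1) (g := g)
    (fun i _ => h1 i)).mp (by simpa using hsum.symm)
  exact fun b => (this b (Finset.mem_univ b)).symm

lemma mu_pos' {w t : ℕ} (ν : Fin t → Fin w) : 0 < mu ν := by
  apply Finset.prod_pos; intro σ _; exact Nat.factorial_pos _

lemma mu_diag' {w : ℕ} (ν : Fin 2 → Fin w) (h : ν 0 = ν 1) : 2 ≤ mu ν := by
  have hf : (Finset.univ.filter fun i => ν i = ν 0) = Finset.univ := by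
    ext i
    simp only [Finset.mem_filter, Finset.mem_univ, true_and, iff_true]
    fin_cases i
    · rfl
    · exact h.symm
  have : Nat.factorial (Finset.univ.filter fun i => ν i = ν 0).card = 2 := by
    rw [hf]; simp [Nat.factorial]
  calc 2 = Nat.factorial (Finset.univ.filter fun i => ν i = ν 0).card := this.symm
    _ ≤ mu ν := Finset.single_le_prod'
        (f := fun σ => Nat.factorial (Finset.univ.filter fun i => ν i = σ).card)
        (fun σ _ => Nat.one_le_iff_ne_zero.mpr (Nat.factorial_ne_zero _))
        (Finset.mem_univ (ν 0))
lemma sum_coversCount' {k w : ℕ} (C : Multiset (Fin k → Fin w)) (c : Fin 2 → Fin k) :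
    ∑ ν : Fin 2 → Fin w, CoversCount C c ν = Multiset.card C := by
  calc ∑ ν : Fin 2 → Fin w, CoversCount C c ν
      = ∑ ν : Fin 2 → Fin w, C.countP (fun ρ => (fun i => ρ (c i)) = ν) := by
        apply Finset.sum_congr rfl; intro ν _; exact coversCount_eq' C c ν
    _ = Multiset.card C := sum_countP_eq' (fun ρ i => ρ (c i)) C

/-- A CA_X(v(v+1); 2, k, v) contains a submultiset of rows forming an
OA(2, k, v) iff it contains, for each symbol `σ`, a constant row with all entries `σ`. -/
theorem cax_contains_oa_iff_constant_rows (v k : ℕ) (hv : 1 ≤ v) (hk : 2 ≤ k)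
    (C : Multiset (Fin k → Fin v)) (hC : IsCAX (v * (v + 1)) 2 k v C) :
    (∃ D ≤ C, IsOA2 k v D) ↔ ∀ σ : Fin v, (fun _ : Fin k => σ) ∈ C := by
  obtain ⟨hCcard, hCcov⟩ := hC
  set col0 : Fin k := ⟨0, by omega⟩ with hcol0
  set col1 : Fin k := ⟨1, by omega⟩ with hcol1
  have hcol01 : col0 ≠ col1 := by simp [hcol0, hcol1, Fin.ext_iff]
  -- pair of columns
  have pair_inj : ∀ j : Fin k, j ≠ col0 →
      Function.Injective (fun i : Fin 2 => if i = 0 then col0 else j) := by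
    intro j hj a b hab
    fin_cases a <;> fin_cases b <;> simp_all <;> exact absurd hab.symm hj
  constructor
  · rintro ⟨D, hDC, hDcard, hDcov⟩
    set E : Multiset (Fin k → Fin v) := C - D with hE
    have hED : E + D = C := tsub_add_cancel_of_le hDC
    have hEcard : Multiset.card E = v := by
      have := congrArg Multiset.card hED
      rw [Multiset.card_add, hDcard, hCcard] at this
      have hvv : v ^ 2 = v * v := sq v
      have hvv2 : v * (v + 1) = v * v + v := by ring
      omega
    -- step 1 : each diagonal interaction covered at least once in E
    have step1 : ∀ c : Fin 2 → Fin k, Function.Injective c → ∀ τ : Fin v,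
        1 ≤ E.countP (fun ρ => ∀ i, ρ (c i) = τ) := by
      intro c hc τ
      have h2 : 2 ≤ CoversCount C c (fun _ => τ) :=
        le_trans (mu_diag' (fun _ => τ) rfl) (hCcov c hc (fun _ => τ))
      have hsplit : CoversCount C c (fun _ => τ)
          = E.countP (fun ρ => ∀ i, ρ (c i) = τ) + CoversCount D c (fun _ => τ) := by
        rw [← hED]; exact Multiset.countP_add _ _ _
      rw [hDcov c hc (fun _ => τ)] at hsplit
      rw [hsplit] at h2
      exact Nat.lt_succ_iff.mp h2
    -- step 2 : E has exactly one row with each value in column 0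
    have step2 : ∀ τ : Fin v, E.countP (fun ρ => ρ col0 = τ) = 1 := by
      have hge : ∀ τ : Fin v, 1 ≤ E.countP (fun ρ => ρ col0 = τ) := by
        intro τ
        have h1 := step1 (fun i : Fin 2 => if i = 0 then col0 else col1)
          (pair_inj col1 hcol01.symm) τ
        have h2 : E.countP (fun ρ => ∀ i : Fin 2, ρ (if i = 0 then col0 else col1) = τ)
            ≤ E.countP (fun ρ => ρ col0 = τ) := by
          apply countP_imp'
          intro ρ h
          simpa using h 0
        exact le_trans h1 h2
      have hsum : ∑ τ : Fin v, E.countP (fun ρ => ρ col0 = τ) = Fintype.card (Fin v) := by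
        rw [sum_countP_eq' (fun ρ => ρ col0) E, hEcard, Fintype.card_fin]
      exact all_eq_one' _ hge hsum
    intro σ
    -- the unique row of E with value σ in column 0
    have hone : Multiset.card (E.filter (fun ρ => ρ col0 = σ)) = 1 := by
      rw [← Multiset.countP_eq_card_filter]; exact step2 σ
    obtain ⟨ρ₀, hρ₀⟩ := Multiset.card_eq_one.mp hone
    have hρ₀mem : ρ₀ ∈ E.filter (fun ρ => ρ col0 = σ) := hρ₀ ▸ Multiset.mem_singleton_self ρ₀
    obtain ⟨hρ₀E, hρ₀0⟩ := Multiset.mem_filter.mp hρ₀mem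
    have hconst : ∀ j : Fin k, ρ₀ j = σ := by
      intro j
      by_cases hj : j = col0
      · rw [hj]; exact hρ₀0
      · have h1 := step1 (fun i : Fin 2 => if i = 0 then col0 else j) (pair_inj j hj) σ
        have h2 : E.countP (fun ρ => ∀ i : Fin 2, ρ (if i = 0 then col0 else j) = σ)
            ≤ E.countP (fun ρ => ρ j = σ ∧ ρ col0 = σ) := by
          apply countP_imp'
          intro ρ h
          exact ⟨by simpa using h 1, by simpa using h 0⟩
        have h3 : 0 < E.countP (fun ρ => ρ j = σ ∧ ρ col0 = σ) :=
          lt_of_lt_of_le Nat.zero_lt_one (le_trans h1 h2)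
        obtain ⟨ρ, hρE, hρj, hρ0⟩ := Multiset.countP_pos.mp h3
        have : ρ ∈ E.filter (fun ρ => ρ col0 = σ) := Multiset.mem_filter.mpr ⟨hρE, hρ0⟩
        rw [hρ₀, Multiset.mem_singleton] at this
        rw [← this]
        exact hρj
    have : (fun _ : Fin k => σ) = ρ₀ := funext fun j => (hconst j).symm
    rw [this]
    exact Multiset.mem_of_le (hE ▸ Multiset.sub_le_self C D) hρ₀E
  · intro hconst
    -- K : the multiset of constant rows
    set K : Multiset (Fin k → Fin v) :=
      (Finset.univ : Finset (Fin v)).val.map (fun σ => (fun _ : Fin k => σ)) with hK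
    have hKnodup : K.Nodup := by
      refine Multiset.Nodup.map ?_ (Finset.univ.nodup)
      intro a b hab
      exact congrFun hab col0
    have hKC : K ≤ C := by
      rw [Multiset.le_iff_subset hKnodup]
      intro a ha
      rw [hK, Multiset.mem_map] at ha
      obtain ⟨σ, _, rfl⟩ := ha
      exact hconst σ
    have hKcard : Multiset.card K = v := by simp [hK]
    have hKcount : ∀ (c : Fin 2 → Fin k) (ν : Fin 2 → Fin v),
        K.countP (fun ρ => ∀ i, ρ (c i) = ν i)
          = if ν 0 = ν 1 then 1 else 0 := by
      intro c ν
      rw [hK, Multiset.countP_map]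
      have : ∀ σ : Fin v, (∀ i : Fin 2, σ = ν i) ↔ (σ = ν 0 ∧ σ = ν 1) := by
        intro σ; rw [Fin.forall_fin_two]
      by_cases hν : ν 0 = ν 1
      · simp only [hν, if_true]
        have : (Finset.univ.val.filter fun σ : Fin v => ∀ i : Fin 2, σ = ν i)
            = (Finset.univ.val.filter fun σ : Fin v => σ = ν 1) := by
          apply Multiset.filter_congr
          intro σ _
          rw [this σ, ← hν, and_self]
        rw [this]
        have h5 : (Finset.univ.filter fun σ : Fin v => σ = ν 1) = {ν 1} := by
          simp [Finset.filter_eq']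
        calc Multiset.card (Finset.univ.val.filter fun σ : Fin v => σ = ν 1)
            = (Finset.univ.filter fun σ : Fin v => σ = ν 1).card := rfl
          _ = 1 := by rw [h5]; rfl
      · simp only [hν, if_false]
        rw [Multiset.card_eq_zero, Multiset.filter_eq_nil]
        intro σ _ h
        exact hν ((((this σ).mp h).1.symm).trans ((this σ).mp h).2)
    set D : Multiset (Fin k → Fin v) := C - K with hD
    have hDK : D + K = C := tsub_add_cancel_of_le hKC
    have hDcard : Multiset.card D = v ^ 2 := by
      have := congrArg Multiset.card hDK
      rw [Multiset.card_add, hKcard, hCcard] at this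
      have hvv : v ^ 2 = v * v := sq v
      have hvv2 : v * (v + 1) = v * v + v := by ring
      omega
    refine ⟨D, hD ▸ Multiset.sub_le_self C K, hDcard, ?_⟩
    intro c hc
    have hge : ∀ ν : Fin 2 → Fin v, 1 ≤ CoversCount D c ν := by
      intro ν
      have hsplit : CoversCount C c ν = CoversCount D c ν
          + K.countP (fun ρ => ∀ i, ρ (c i) = ν i) := by
        rw [← hDK]; exact Multiset.countP_add _ _ _
      have hmu : mu ν ≤ CoversCount C c ν := hCcov c hc ν
      rw [hKcount c ν] at hsplit
      by_cases hν : ν 0 = ν 1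
      · have := mu_diag' ν hν
        rw [if_pos hν] at hsplit
        omega
      · have := mu_pos' ν
        rw [if_neg hν] at hsplit
        omega
    have hsum : ∑ ν : Fin 2 → Fin v, CoversCount D c ν = Fintype.card (Fin 2 → Fin v) := by
      rw [sum_coversCount' D c, hDcard]
      simp [Fintype.card_fun]
    exact all_eq_one' _ hge hsum
end

section
/- Let t ≥ 1 and k ≥ t, and let C be a CA_X(N; t, k, 2) over the binary alphabet [2] = {0,1} such that every t-way interaction T is covered by exactly μ(T) rows of C. Then N = (t+1)!. -/

lemma sum_countP_eq_card {k t : ℕ} (C : Multiset (Fin k → Fin 2)) (c : Fin t → Fin k) :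
    ∑ ν : Fin t → Fin 2, CoversCount C c ν = Multiset.card C := by
  induction C using Multiset.induction with
  | empty => simp [CoversCount]
  | cons a s ih =>
    simp only [CoversCount, Multiset.countP_cons, Multiset.card_cons, Finset.sum_add_distrib]
    have h1 : (∑ ν : Fin t → Fin 2, if (∀ i, a (c i) = ν i) then 1 else 0) = 1 := by
      have : ∀ ν : Fin t → Fin 2,
          (if (∀ i, a (c i) = ν i) then (1:ℕ) else 0) = if ν = (fun i => a (c i)) then 1 else 0 := by
        intro ν
        congr 1
        simp only [eq_iff_iff]
        constructor
        · intro h; funext i; exact (h i).symm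
        · intro h i; rw [h]
      rw [Finset.sum_congr rfl (fun ν _ => this ν)]
      simp
    rw [h1]
    exact congrArg (· + 1) ih

lemma filter_card_cons {t : ℕ} (a : Fin 2) (ν : Fin t → Fin 2) (σ : Fin 2) :
    (Finset.univ.filter fun i : Fin (t+1) => (Fin.cons a ν : Fin (t+1) → Fin 2) i = σ).card
      = (if a = σ then 1 else 0) + (Finset.univ.filter fun i : Fin t => ν i = σ).card := by
  rw [Finset.card_filter, Finset.card_filter, Fin.sum_univ_succ]
  simp [Fin.cons_zero, Fin.cons_succ]

lemma filter_card_add {t : ℕ} (ν : Fin t → Fin 2) :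
    (Finset.univ.filter fun i : Fin t => ν i = 0).card
      + (Finset.univ.filter fun i : Fin t => ν i = 1).card = t := by
  have h : (Finset.univ.filter fun i : Fin t => ν i = 1)
      = (Finset.univ.filter fun i : Fin t => ¬ ν i = 0) := by
    apply Finset.filter_congr
    intro i _
    constructor
    · intro h h0; rw [h0] at h; exact absurd h (by decide)
    · intro h; have := ν i; omega
  rw [h, Finset.card_filter_add_card_filter_not]
  simp

lemma sum_mu (t : ℕ) : ∑ ν : Fin t → Fin 2, mu ν = Nat.factorial (t + 1) := by
  induction t with
  | zero =>
    simp [mu]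
  | succ t ih =>
    have hsum := Fintype.sum_equiv (Fin.consEquiv (fun _ : Fin (t+1) => Fin 2))
      (fun p : Fin 2 × (Fin t → Fin 2) => mu (Fin.cons p.1 p.2)) mu (fun p => rfl)
    rw [← hsum, Fintype.sum_prod_type]
    have key : ∀ ν : Fin t → Fin 2,
        (∑ a : Fin 2, mu (Fin.cons a ν)) = (t + 2) * mu ν := by
      intro ν
      rw [Fin.sum_univ_two]
      set j0 := (Finset.univ.filter fun i : Fin t => ν i = 0).card with hj0
      set j1 := (Finset.univ.filter fun i : Fin t => ν i = 1).card with hj1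
      have hmu : mu ν = Nat.factorial j0 * Nat.factorial j1 := by
        simp [mu, Fin.prod_univ_two, hj0, hj1]
      have hc0 : mu (Fin.cons 0 ν) = Nat.factorial (j0 + 1) * Nat.factorial j1 := by
        simp [mu, Fin.prod_univ_two, filter_card_cons, hj0, hj1, Nat.add_comm]
      have hc1 : mu (Fin.cons 1 ν) = Nat.factorial j0 * Nat.factorial (j1 + 1) := by
        simp [mu, Fin.prod_univ_two, filter_card_cons, hj0, hj1, Nat.add_comm]
      have hsum : j0 + j1 = t := filter_card_add ν
      rw [hc0, hc1, hmu, Nat.factorial_succ, Nat.factorial_succ]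
      ring_nf
      nlinarith [hsum]
    rw [Finset.sum_comm]
    calc (∑ ν : Fin t → Fin 2, ∑ a : Fin 2, mu (Fin.cons a ν))
        = ∑ ν : Fin t → Fin 2, (t + 2) * mu ν := Finset.sum_congr rfl (fun ν _ => key ν)
      _ = (t + 2) * ∑ ν : Fin t → Fin 2, mu ν := by rw [Finset.mul_sum]
      _ = (t + 2) * Nat.factorial (t + 1) := by rw [ih]
      _ = Nat.factorial (t + 2) := (Nat.factorial_succ (t+1)).symm

/-- If `C` is a binary CA_X(N; t, k, 2) (with `t ≥ 1`, `k ≥ t`) in which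
every `t`-way interaction `T` is covered by exactly `μ(T)` rows, then `N = (t+1)!`. -/
theorem binary_exact_cax_card (t k N : ℕ) (ht : 1 ≤ t) (hk : t ≤ k)
    (C : Multiset (Fin k → Fin 2)) (hcard : Multiset.card C = N)
    (hexact : ∀ c : Fin t → Fin k, Function.Injective c →
      ∀ ν : Fin t → Fin 2, CoversCount C c ν = mu ν) :
    N = Nat.factorial (t + 1) := by
  have hc : Function.Injective (Fin.castLE hk) := Fin.castLE_injective hk
  have h1 := sum_countP_eq_card C (Fin.castLE hk)
  rw [Finset.sum_congr rfl (fun ν _ => hexact (Fin.castLE hk) hc ν)] at h1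
  rw [sum_mu t] at h1
  omega
end

section
/- For t ≥ 1, the number of distinct CA_X((t+1)!; t, t+1, 2) (as multisets of rows) is exactly ⌊t/2⌋! · ⌈t/2⌉! + 1. -/
namespace BCX

open Finset

lemma fin2_cases (x : Fin 2) : x = 0 ∨ x = 1 := by revert x; decide

/-- weight of a binary row -/
def wt {n : ℕ} (ρ : Fin n → Fin 2) : ℕ := ∑ i, (ρ i : ℕ)

def fct (t w : ℕ) : ℕ := (t - w).factorial * w.factorial

lemma wt_le {n : ℕ} (ν : Fin n → Fin 2) : wt ν ≤ n := by
  have h : ∀ i : Fin n, (ν i : ℕ) ≤ 1 := fun i => Nat.lt_succ_iff.mp (ν i).isLt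
  calc wt ν ≤ ∑ _i : Fin n, 1 := Finset.sum_le_sum fun i _ => h i
    _ = n := by simp

lemma card_filter_one {n : ℕ} (ν : Fin n → Fin 2) :
    (univ.filter fun i => ν i = 1).card = wt ν := by
  rw [Finset.card_filter, wt]
  refine Finset.sum_congr rfl fun i _ => ?_
  rcases fin2_cases (ν i) with h | h <;> simp [h]

lemma card_filter_zero {n : ℕ} (ν : Fin n → Fin 2) :
    (univ.filter fun i => ν i = 0).card = n - wt ν := by
  have h := Finset.card_filter_add_card_filter_not
    (s := (univ : Finset (Fin n))) (p := fun i => ν i = 1)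
  have h2 : (univ.filter fun i => ¬ ν i = 1) = (univ.filter fun i => ν i = 0) := by
    refine Finset.filter_congr fun i _ => ?_
    rcases fin2_cases (ν i) with h' | h' <;> simp [h']
  rw [h2, card_filter_one, Finset.card_univ, Fintype.card_fin] at h
  have := wt_le ν
  omega

lemma mu_eq {t : ℕ} (ν : Fin t → Fin 2) : mu ν = fct t (wt ν) := by
  rw [mu, Fin.prod_univ_two, card_filter_zero, card_filter_one, fct]

def ins {t : ℕ} (j : Fin (t+1)) (b : Fin 2) (ν : Fin t → Fin 2) : Fin (t+1) → Fin 2 :=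
  j.insertNth b ν

@[simp] lemma ins_same {t : ℕ} (j : Fin (t+1)) (b : Fin 2) (ν : Fin t → Fin 2) :
    ins j b ν j = b := by simp [ins]

@[simp] lemma ins_succAbove {t : ℕ} (j : Fin (t+1)) (b : Fin 2) (ν : Fin t → Fin 2) (i : Fin t) :
    ins j b ν (j.succAbove i) = ν i := by simp [ins]

lemma wt_insertNth {t : ℕ} (j : Fin (t+1)) (b : Fin 2) (ν : Fin t → Fin 2) :
    wt (j.insertNth b ν) = (b : ℕ) + wt ν := by
  rw [wt, Fin.sum_univ_succAbove _ j]
  simp [wt]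

lemma wt_eq {t : ℕ} (j : Fin (t+1)) (ρ : Fin (t+1) → Fin 2) :
    wt ρ = (ρ j : ℕ) + wt (j.removeNth ρ) :=
  Fin.sum_univ_succAbove (fun i => ((ρ i : ℕ))) j

lemma countP_eq {α : Type} [DecidableEq α] [Fintype α] (C : Multiset α) (p : α → Prop)
    [DecidablePred p] : C.countP p = ∑ a : α, if p a then C.count a else 0 := by
  induction C using Multiset.induction_on with
  | empty => simp
  | cons a s ih =>
    rw [Multiset.countP_cons, ih]
    have h : ∀ x : α, (if p x then (a ::ₘ s).count x else 0)
        = (if p x then s.count x else 0) + (if x = a then (if p a then 1 else 0) else 0) := by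
      intro x
      by_cases hx : x = a
      · subst hx; by_cases hp : p x <;> simp [hp, Multiset.count_cons]
      · by_cases hp : p x <;> simp [hp, hx, Multiset.count_cons]
    rw [Finset.sum_congr rfl fun x _ => h x, Finset.sum_add_distrib,
      Finset.sum_ite_eq' univ a (fun _ => if p a then 1 else 0)]
    simp

lemma sum_count_univ {α : Type} [DecidableEq α] [Fintype α] (C : Multiset α) :
    ∑ a : α, C.count a = Multiset.card C :=
  Multiset.sum_count_eq_card fun a _ => Finset.mem_univ a

lemma coversCount_succAbove {t : ℕ} (C : Multiset (Fin (t+1) → Fin 2)) (j : Fin (t+1))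
    (ν : Fin t → Fin 2) :
    CoversCount C (j.succAbove) ν = C.count (ins j 0 ν) + C.count (ins j 1 ν) := by
  classical
  have hne : ins j 0 ν ≠ ins j 1 ν := by
    intro h
    have := congrFun h j
    simp at this
  have hiff : ∀ ρ : Fin (t+1) → Fin 2,
      (∀ i, ρ (j.succAbove i) = ν i) ↔ (ρ = ins j 0 ν ∨ ρ = ins j 1 ν) := by
    intro ρ
    constructor
    · intro h
      have hrm : j.removeNth ρ = ν := funext h
      have hρ : ρ = ins j (ρ j) ν := by
        rw [ins, ← hrm, Fin.insertNth_self_removeNth]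
      rcases fin2_cases (ρ j) with h0 | h0
      · left; rw [hρ, h0]
      · right; rw [hρ, h0]
    · rintro (rfl | rfl) i <;> simp
  have h1 : CoversCount C (j.succAbove) ν
      = Multiset.countP (fun ρ => ρ = ins j 0 ν ∨ ρ = ins j 1 ν) C :=
    Multiset.countP_congr rfl (fun x _ => by rw [eq_iff_iff]; exact hiff x)
  rw [h1, countP_eq]
  have h : ∀ a : Fin (t+1) → Fin 2,
      (if (a = ins j 0 ν ∨ a = ins j 1 ν) then C.count a else 0)
      = (if a = ins j 0 ν then C.count a else 0)
        + (if a = ins j 1 ν then C.count a else 0) := by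
    intro a
    by_cases h0 : a = ins j 0 ν <;> by_cases h1 : a = ins j 1 ν
    · exact absurd (h0 ▸ h1.symm ▸ rfl : ins j 0 ν = ins j 1 ν) hne
    · simp [h0, h1, hne]
    · simp [h0, h1, Ne.symm hne]
    · simp [h0, h1]
  rw [Finset.sum_congr rfl fun a _ => h a, Finset.sum_add_distrib,
    Finset.sum_ite_eq' univ _ (fun a => C.count a),
    Finset.sum_ite_eq' univ _ (fun a => C.count a)]
  simp

lemma coversCount_general {t : ℕ} (c : Fin t → Fin (t+1)) (hc : Function.Injective c)
    (ν : Fin t → Fin 2) :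
    ∃ (j : Fin (t+1)) (ν' : Fin t → Fin 2), wt ν' = wt ν ∧
      ∀ C : Multiset (Fin (t+1) → Fin 2), CoversCount C c ν = CoversCount C (j.succAbove) ν' := by
  classical
  have hcard : (univ.image c)ᶜ.card = 1 := by
    rw [Finset.card_compl, Finset.card_image_of_injective _ hc]
    simp
  obtain ⟨j, hj⟩ := Finset.card_eq_one.mp hcard
  have hmem : ∀ k : Fin (t+1), k ≠ j → ∃ i, c i = k := by
    intro k hk
    by_contra h
    push_neg at h
    have hkc : k ∈ (univ.image c)ᶜ := by
      simp only [Finset.mem_compl, Finset.mem_image, not_exists]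
      push_neg
      intro i _
      exact h i
    rw [hj, Finset.mem_singleton] at hkc
    exact hk hkc
  choose θ hθ using fun i : Fin t => hmem (j.succAbove i) (Fin.succAbove_ne j i)
  have hθinj : Function.Injective θ := by
    intro a b hab
    have h1 : j.succAbove a = j.succAbove b := by rw [← hθ a, ← hθ b, hab]
    exact Fin.succAbove_right_injective h1
  have hθbij := Finite.injective_iff_bijective.mp hθinj
  refine ⟨j, ν ∘ θ, hθbij.sum_comp fun i => ((ν i : ℕ)), ?_⟩
  intro C
  rw [CoversCount, CoversCount]
  refine Multiset.countP_congr rfl fun ρ _ => ?_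
  rw [eq_iff_iff]
  constructor
  · intro h i
    have : ρ (c (θ i)) = ν (θ i) := h (θ i)
    rwa [hθ i] at this
  · intro h i
    obtain ⟨i', hi'⟩ := hθbij.surjective i
    have hci : c i = j.succAbove i' := by rw [← hθ i', hi']
    have := h i'
    rw [← hci] at this
    rw [this, Function.comp_apply, hi']

/-! ### The alternating solution parametrized by its value at `t/2` -/

lemma fct_le_succ {t u : ℕ} (h : t/2 ≤ u) : fct t u ≤ fct t (u+1) := by
  rcases le_or_gt t u with h1 | h1
  · rw [fct, fct, Nat.sub_eq_zero_of_le h1, Nat.sub_eq_zero_of_le (by omega)]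
    exact Nat.mul_le_mul_left _ (Nat.factorial_le (by omega))
  · have h2 : t - u = (t - (u+1)) + 1 := by omega
    have h3 : t - (u+1) + 1 ≤ u + 1 := by omega
    rw [fct, fct, h2, Nat.factorial_succ, Nat.factorial_succ]
    calc (t - (u+1) + 1) * (t-(u+1)).factorial * u.factorial
        = (t - (u+1) + 1) * ((t-(u+1)).factorial * u.factorial) := by ring
      _ ≤ (u+1) * ((t-(u+1)).factorial * u.factorial) :=
          Nat.mul_le_mul_right _ h3
      _ = (t-(u+1)).factorial * ((u+1) * u.factorial) := by ring

lemma fct_succ_le {t u : ℕ} (h : u + 1 ≤ t/2) : fct t (u+1) ≤ fct t u := by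
  have h2 : t - u = (t - (u+1)) + 1 := by omega
  have h3 : u + 1 ≤ t - (u+1) + 1 := by omega
  rw [fct, fct, h2, Nat.factorial_succ, Nat.factorial_succ]
  calc (t-(u+1)).factorial * ((u+1) * u.factorial)
      = (u+1) * ((t-(u+1)).factorial * u.factorial) := by ring
    _ ≤ (t-(u+1)+1) * ((t-(u+1)).factorial * u.factorial) := Nat.mul_le_mul_right _ h3
    _ = (t-(u+1)+1) * (t-(u+1)).factorial * u.factorial := by ring

def gUp (t : ℕ) (x : ℤ) : ℕ → ℤ
  | 0 => x
  | j+1 => (fct t (t/2 + j) : ℤ) - gUp t x j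

def gDn (t : ℕ) (x : ℤ) : ℕ → ℤ
  | 0 => x
  | j+1 => (fct t (t/2 - (j+1)) : ℤ) - gDn t x j

def gZ (t : ℕ) (x : ℤ) (w : ℕ) : ℤ :=
  if t/2 ≤ w then gUp t x (w - t/2) else gDn t x (t/2 - w)

lemma gZ_mid (t : ℕ) (x : ℤ) : gZ t x (t/2) = x := by
  simp [gZ, gUp]

lemma gZ_rec (t : ℕ) (x : ℤ) (w : ℕ) : gZ t x w + gZ t x (w+1) = (fct t w : ℤ) := by
  rcases le_or_gt (t/2) w with h | h
  · have h1 : t/2 ≤ w + 1 := by omega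
    rw [gZ, gZ, if_pos h, if_pos h1]
    have h2 : w + 1 - t/2 = (w - t/2) + 1 := by omega
    rw [h2, gUp]
    have h3 : t/2 + (w - t/2) = w := by omega
    rw [h3]; ring
  · have h2 : t/2 - w = (t/2 - w - 1) + 1 := by omega
    have hL : gZ t x w = (fct t w : ℤ) - gDn t x (t/2 - w - 1) := by
      rw [gZ, if_neg (by omega), h2, gDn]
      have h4 : t/2 - (t/2 - w - 1 + 1) = w := by omega
      rw [h4]
      have h5 : t/2 - w - 1 + 1 - 1 = t/2 - w - 1 := by omega
      rw [h5]
    have hR : gZ t x (w+1) = gDn t x (t/2 - w - 1) := by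
      rcases eq_or_lt_of_le (show w + 1 ≤ t/2 by omega) with he | hlt
      · rw [gZ, if_pos (le_of_eq he.symm)]
        have h5 : w + 1 - t/2 = 0 := by omega
        have h6 : t/2 - w - 1 = 0 := by omega
        rw [h5, h6]; rfl
      · rw [gZ, if_neg (by omega)]
        have h7 : t/2 - (w+1) = t/2 - w - 1 := by omega
        rw [h7]
    rw [hL, hR]; ring

lemma gZ_up_bounds (t : ℕ) (x : ℤ) (hx0 : 0 ≤ x) (hx1 : x ≤ (fct t (t/2) : ℤ)) :
    ∀ k, 0 ≤ gZ t x (t/2 + 1 + k) ∧ gZ t x (t/2 + 1 + k) ≤ (fct t (t/2 + k) : ℤ) := by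
  intro k
  induction k with
  | zero =>
    have h := gZ_rec t x (t/2)
    rw [gZ_mid] at h
    simp only [Nat.add_zero]
    constructor <;> linarith
  | succ k ih =>
    have h := gZ_rec t x (t/2 + 1 + k)
    have hf : (fct t (t/2 + 1 + k) : ℤ) ≥ (fct t (t/2 + k) : ℤ) := by
      have := fct_le_succ (t := t) (u := t/2 + k) (by omega)
      rw [show t/2 + k + 1 = t/2 + 1 + k by omega] at this
      exact_mod_cast this
    have e : t/2 + 1 + (k+1) = (t/2 + 1 + k) + 1 := by omega
    rw [e]
    constructor
    · linarith [ih.1, ih.2]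
    · have e2 : t/2 + (k+1) = t/2 + 1 + k := by omega
      rw [e2]
      linarith [ih.1]

lemma gZ_dn_bounds (t : ℕ) (x : ℤ) (hx0 : 0 ≤ x) (hx1 : x ≤ (fct t (t/2) : ℤ)) :
    ∀ k, 0 ≤ gZ t x (t/2 - k) ∧ gZ t x (t/2 - k) ≤ (fct t (t/2 - k) : ℤ) := by
  intro k
  induction k with
  | zero => rw [Nat.sub_zero, gZ_mid]; exact ⟨hx0, hx1⟩
  | succ k ih =>
    rcases le_or_gt (t/2) k with h | h
    · rw [show t/2 - (k+1) = t/2 - k by omega]; exact ih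
    · have e : t/2 - k = (t/2 - (k+1)) + 1 := by omega
      have hr := gZ_rec t x (t/2 - (k+1))
      rw [← e] at hr
      have hf : (fct t (t/2 - k) : ℤ) ≤ (fct t (t/2 - (k+1)) : ℤ) := by
        have := fct_succ_le (t := t) (u := t/2 - (k+1)) (by omega)
        rw [← e] at this
        exact_mod_cast this
      exact ⟨by linarith [ih.2], by linarith [ih.1]⟩

lemma gZ_nonneg (t : ℕ) (x : ℤ) (hx0 : 0 ≤ x) (hx1 : x ≤ (fct t (t/2) : ℤ)) (w : ℕ) :
    0 ≤ gZ t x w := by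
  rcases le_or_gt w (t/2) with h | h
  · have e : w = t/2 - (t/2 - w) := by omega
    rw [e]; exact (gZ_dn_bounds t x hx0 hx1 _).1
  · have e : w = t/2 + 1 + (w - t/2 - 1) := by omega
    rw [e]; exact (gZ_up_bounds t x hx0 hx1 _).1

def cnt (t x w : ℕ) : ℕ := (gZ t x w).toNat

lemma cnt_mid (t x : ℕ) : cnt t x (t/2) = x := by
  rw [cnt, gZ_mid]; exact Int.toNat_natCast x

lemma cnt_add (t x : ℕ) (hx : x ≤ fct t (t/2)) (w : ℕ) :
    cnt t x w + cnt t x (w+1) = fct t w := by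
  have hx0 : (0:ℤ) ≤ (x:ℤ) := Int.natCast_nonneg x
  have hx1 : (x:ℤ) ≤ (fct t (t/2) : ℤ) := by exact_mod_cast hx
  rw [cnt, cnt, ← Int.toNat_add (gZ_nonneg t x hx0 hx1 w) (gZ_nonneg t x hx0 hx1 (w+1)),
    gZ_rec, Int.toNat_natCast]

/-! ### The candidate arrays -/

def CX (t x : ℕ) : Multiset (Fin (t+1) → Fin 2) :=
  ∑ ρ : Fin (t+1) → Fin 2, Multiset.replicate (cnt t x (wt ρ)) ρ

lemma count_CX (t x : ℕ) (ρ : Fin (t+1) → Fin 2) : (CX t x).count ρ = cnt t x (wt ρ) := by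
  classical
  rw [CX, Multiset.count_sum']
  rw [Finset.sum_congr rfl (fun a _ => Multiset.count_replicate ρ a (cnt t x (wt a)))]
  rw [Finset.sum_ite_eq' univ ρ (fun a => cnt t x (wt a))]
  simp

lemma sum_insertNth {t : ℕ} (F : ℕ → ℕ) :
    ∑ ρ : Fin (t+1) → Fin 2, F (wt ρ) = ∑ ν : Fin t → Fin 2, (F (wt ν) + F (wt ν + 1)) := by
  classical
  rw [← Equiv.sum_comp (Fin.insertNthEquiv (fun _ : Fin (t+1) => Fin 2) 0)
    (fun ρ => F (wt ρ)), Fintype.sum_prod_type]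
  have h : ∀ (b : Fin 2) (ν : Fin t → Fin 2),
      (Fin.insertNthEquiv (fun _ : Fin (t+1) => Fin 2) 0) (b, ν) = ins 0 b ν := fun _ _ => rfl
  rw [Fin.sum_univ_two]
  have h0 : ∀ ν : Fin t → Fin 2, wt ((Fin.insertNthEquiv (fun _ : Fin (t+1) => Fin 2) 0)
      ((0 : Fin 2), ν)) = wt ν := by
    intro ν; rw [h]; rw [ins, wt_insertNth, show ((0:Fin 2):ℕ) = 0 by decide, Nat.zero_add]
  have h1 : ∀ ν : Fin t → Fin 2, wt ((Fin.insertNthEquiv (fun _ : Fin (t+1) => Fin 2) 0)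
      ((1 : Fin 2), ν)) = wt ν + 1 := by
    intro ν; rw [h]; rw [ins, wt_insertNth, show ((1:Fin 2):ℕ) = 1 by decide]
    omega
  rw [Finset.sum_congr rfl fun ν _ => congrArg F (h0 ν),
    Finset.sum_congr rfl fun ν _ => congrArg F (h1 ν), ← Finset.sum_add_distrib]

lemma fct_pair (t w : ℕ) (hw : w ≤ t) :
    fct (t+1) w + fct (t+1) (w+1) = (t+2) * fct t w := by
  have h1 : t + 1 - w = (t - w) + 1 := by omega
  have h2 : t + 1 - (w+1) = t - w := by omega
  rw [fct, fct, fct, h1, h2, Nat.factorial_succ, Nat.factorial_succ]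
  have h3 : t + 2 = (t - w + 1) + (w + 1) := by omega
  rw [h3]; ring

lemma sum_fct (t : ℕ) : ∑ ν : Fin t → Fin 2, fct t (wt ν) = (t+1).factorial := by
  induction t with
  | zero =>
    rw [Fintype.sum_unique (fun ν : Fin 0 → Fin 2 => fct 0 (wt ν))]
    simp [fct, wt]
  | succ t ih =>
    rw [sum_insertNth (F := fct (t+1))]
    rw [Finset.sum_congr rfl fun ν _ => fct_pair t (wt ν) (wt_le ν)]
    rw [← Finset.mul_sum, ih, Nat.factorial_succ (t+1)]

lemma card_CX (t x : ℕ) (hx : x ≤ fct t (t/2)) :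
    Multiset.card (CX t x) = (t+1).factorial := by
  classical
  have h1 : Multiset.card (CX t x) = ∑ ρ : Fin (t+1) → Fin 2, (CX t x).count ρ :=
    (sum_count_univ _).symm
  rw [h1, Finset.sum_congr rfl fun ρ _ => count_CX t x ρ, sum_insertNth (F := cnt t x),
    Finset.sum_congr rfl fun ν _ => cnt_add t x hx (wt ν), sum_fct]

theorem isCAX_CX (t x : ℕ) (hx : x ≤ fct t (t/2)) :
    IsCAX ((t+1).factorial) t (t+1) 2 (CX t x) := by
  refine ⟨card_CX t x hx, ?_⟩
  intro c hc ν
  obtain ⟨j, ν', hwt, hcc⟩ := coversCount_general c hc ν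
  rw [hcc, coversCount_succAbove, count_CX, count_CX, mu_eq, ← hwt]
  rw [show wt (ins j 0 ν') = wt ν' from by
    rw [ins, wt_insertNth, show ((0:Fin 2):ℕ) = 0 by decide, Nat.zero_add]]
  rw [show wt (ins j 1 ν') = wt ν' + 1 from by
    rw [ins, wt_insertNth, show ((1:Fin 2):ℕ) = 1 by decide]; omega]
  exact le_of_eq (cnt_add t x hx (wt ν')).symm

/-! ### Every CAX has this form -/

lemma ins_removeNth_eq {t : ℕ} (j : Fin (t+1)) (b : Fin 2) (ρ : Fin (t+1) → Fin 2) :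
    ins j b (j.removeNth ρ) = Function.update ρ j b := by
  funext k
  rcases eq_or_ne k j with rfl | hk
  · simp
  · obtain ⟨i, rfl⟩ := Fin.exists_succAbove_eq hk
    rw [ins_succAbove, Function.update_of_ne (Fin.succAbove_ne j i)]
    rfl

lemma wt_update {t : ℕ} (j : Fin (t+1)) (b : Fin 2) (ρ : Fin (t+1) → Fin 2) :
    wt (Function.update ρ j b) = (b : ℕ) + wt (j.removeNth ρ) := by
  rw [← ins_removeNth_eq, ins, wt_insertNth]

/-- The key linear equations satisfied by the multiplicity function of a CAX. -/
lemma key_eq {t : ℕ} {C : Multiset (Fin (t+1) → Fin 2)}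
    (hC : IsCAX ((t+1).factorial) t (t+1) 2 C) (j : Fin (t+1)) (ν : Fin t → Fin 2) :
    C.count (ins j 0 ν) + C.count (ins j 1 ν) = fct t (wt ν) := by
  classical
  obtain ⟨hcard, hcov⟩ := hC
  have hle : ∀ ν' : Fin t → Fin 2, fct t (wt ν') ≤ CoversCount C (j.succAbove) ν' := by
    intro ν'
    rw [← mu_eq]
    exact hcov _ (Fin.succAbove_right_injective) ν'
  have hsum : ∑ ν' : Fin t → Fin 2, fct t (wt ν')
      = ∑ ν' : Fin t → Fin 2, CoversCount C (j.succAbove) ν' := by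
    rw [sum_fct]
    have h1 : ∀ ν' : Fin t → Fin 2, CoversCount C (j.succAbove) ν'
        = ∑ b : Fin 2, C.count (ins j b ν') := by
      intro ν'
      rw [coversCount_succAbove, Fin.sum_univ_two]
    rw [Finset.sum_congr rfl fun ν' _ => h1 ν', Finset.sum_comm,
      ← Fintype.sum_prod_type (fun p : Fin 2 × (Fin t → Fin 2) => C.count (ins j p.1 p.2))]
    have h2 : ∀ p : Fin 2 × (Fin t → Fin 2),
        ins j p.1 p.2 = (Fin.insertNthEquiv (fun _ : Fin (t+1) => Fin 2) j) p := fun _ => rfl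
    rw [Finset.sum_congr rfl fun p _ => congrArg C.count (h2 p),
      Equiv.sum_comp (Fin.insertNthEquiv (fun _ : Fin (t+1) => Fin 2) j) (fun ρ => C.count ρ),
      sum_count_univ, hcard]
  have hall := (Finset.sum_eq_sum_iff_of_le fun ν' _ => hle ν').mp hsum
  have h := hall ν (Finset.mem_univ ν)
  rw [coversCount_succAbove] at h
  exact h.symm

/-- Swapping a 0 and a 1 in a row does not change its multiplicity. -/
lemma count_swap {t : ℕ} {C : Multiset (Fin (t+1) → Fin 2)}
    (hC : IsCAX ((t+1).factorial) t (t+1) 2 C) {ρ : Fin (t+1) → Fin 2} {k l : Fin (t+1)}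
    (hkl : k ≠ l) (hk : ρ k = 0) (hl : ρ l = 1) :
    C.count ρ = C.count (Function.update (Function.update ρ k 1) l 0) := by
  classical
  set ν := k.removeNth ρ with hν
  have hρ : ins k 0 ν = ρ := by
    rw [hν, ← hk, ins, Fin.insertNth_self_removeNth]
  set ρp := Function.update ρ k 1 with hρp
  have hρp' : ins k 1 ν = ρp := by rw [hν, ins_removeNth_eq]
  have h1 : C.count ρ + C.count ρp = fct t (wt ν) := by
    rw [← hρ, ← hρp']; exact key_eq hC k ν
  have hρpl : ρp l = 1 := by
    rw [hρp, Function.update_of_ne (Ne.symm hkl)]; exact hl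
  set ν2 := l.removeNth ρp with hν2
  have e1 : ins l 1 ν2 = ρp := by
    rw [hν2, ins_removeNth_eq, ← hρpl, Function.update_eq_self]
  have e0 : ins l 0 ν2 = Function.update ρp l 0 := by
    rw [hν2, ins_removeNth_eq]
  have h2 : C.count (Function.update ρp l 0) + C.count ρp = fct t (wt ν2) := by
    rw [← e0, ← e1]; exact key_eq hC l ν2
  have hwν2 : wt ν2 = wt ν := by
    have a1 : wt ρp = 1 + wt ν := by
      rw [← hρp', ins, wt_insertNth, show ((1:Fin 2):ℕ) = 1 by decide]
    have a2 : wt ρp = (ρp l : ℕ) + wt ν2 := wt_eq l ρp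
    rw [hρpl, show ((1:Fin 2):ℕ) = 1 by decide] at a2
    omega
  rw [hwν2] at h2
  omega

/-- Rows of equal weight have equal multiplicity in a CAX. -/
lemma count_eq_of_wt_eq {t : ℕ} {C : Multiset (Fin (t+1) → Fin 2)}
    (hC : IsCAX ((t+1).factorial) t (t+1) 2 C) :
    ∀ ρ ρ' : Fin (t+1) → Fin 2, wt ρ = wt ρ' → C.count ρ = C.count ρ' := by
  classical
  suffices H : ∀ n (ρ ρ' : Fin (t+1) → Fin 2),
      (univ.filter fun i => ρ i ≠ ρ' i).card = n → wt ρ = wt ρ' →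
      C.count ρ = C.count ρ' by
    intro ρ ρ' h
    exact H _ ρ ρ' rfl h
  intro n
  induction n using Nat.strong_induction_on with
  | _ n ih =>
    intro ρ ρ' hn hw
    rcases Nat.eq_zero_or_pos n with rfl | hpos
    · have hall : ∀ i, ρ i = ρ' i := by
        intro i
        by_contra hne
        have hi : i ∈ univ.filter fun i => ρ i ≠ ρ' i := by simp [hne]
        rw [Finset.card_eq_zero.mp hn] at hi
        exact absurd hi (Finset.notMem_empty i)
      exact congrArg C.count (funext hall)
    · set A := univ.filter fun i => ρ i = 1 ∧ ρ' i = 0 with hA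
      set B := univ.filter fun i => ρ i = 0 ∧ ρ' i = 1 with hB
      have hAB : wt ρ + B.card = wt ρ' + A.card := by
        have hpt : ∀ i : Fin (t+1),
            (ρ i : ℕ) + (if ρ i = 0 ∧ ρ' i = 1 then 1 else 0)
            = (ρ' i : ℕ) + (if ρ i = 1 ∧ ρ' i = 0 then 1 else 0) := by
          intro i
          rcases fin2_cases (ρ i) with h | h <;> rcases fin2_cases (ρ' i) with h' | h' <;>
            simp [h, h']
        have hs := Finset.sum_congr rfl (fun i (_ : i ∈ univ) => hpt i)
        rw [Finset.sum_add_distrib, Finset.sum_add_distrib] at hs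
        rw [hA, hB, Finset.card_filter, Finset.card_filter]
        exact hs
      -- both A and B are nonempty
      obtain ⟨k, hk⟩ := Finset.card_pos.mp (hn ▸ hpos)
      have hk' : ρ k ≠ ρ' k := (Finset.mem_filter.mp hk).2
      have hcase : k ∈ A ∨ k ∈ B := by
        rcases fin2_cases (ρ k) with h | h <;> rcases fin2_cases (ρ' k) with h' | h'
        · exact absurd (h.trans h'.symm) hk'
        · right; rw [hB]; simp [h, h']
        · left; rw [hA]; simp [h, h']
        · exact absurd (h.trans h'.symm) hk'
      have hABne : A.Nonempty ∧ B.Nonempty := by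
        rcases hcase with h | h
        · refine ⟨⟨k, h⟩, Finset.card_pos.mp ?_⟩
          have : 0 < A.card := Finset.card_pos.mpr ⟨k, h⟩
          omega
        · refine ⟨Finset.card_pos.mp ?_, ⟨k, h⟩⟩
          have : 0 < B.card := Finset.card_pos.mpr ⟨k, h⟩
          omega
      obtain ⟨⟨a, ha⟩, ⟨b, hb⟩⟩ := hABne
      rw [hA, Finset.mem_filter] at ha
      rw [hB, Finset.mem_filter] at hb
      have hab : b ≠ a := by
        intro h
        rw [h] at hb
        rw [ha.2.1] at hb
        exact absurd hb.2.1 (by decide)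
      set ρ₂ := Function.update (Function.update ρ b 1) a 0 with hρ₂
      have hcount : C.count ρ = C.count ρ₂ := count_swap hC hab hb.2.1 ha.2.1
      -- values of ρ₂
      have hρ₂a : ρ₂ a = 0 := by rw [hρ₂]; simp
      have hρ₂b : ρ₂ b = 1 := by
        rw [hρ₂, Function.update_of_ne hab, Function.update_self]
      have hρ₂i : ∀ i, i ≠ a → i ≠ b → ρ₂ i = ρ i := by
        intro i hia hib
        rw [hρ₂, Function.update_of_ne hia, Function.update_of_ne hib]
      -- weight of ρ₂
      have hwρ₂ : wt ρ₂ = wt ρ := by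
        have e3 : wt ρ₂ = (0 : ℕ) + wt (a.removeNth (Function.update ρ b 1)) := by
          rw [hρ₂, wt_update]; rfl
        have e4 : wt (Function.update ρ b 1)
            = ((Function.update ρ b 1) a : ℕ) + wt (a.removeNth (Function.update ρ b 1)) :=
          wt_eq a _
        have e5 : (Function.update ρ b 1) a = 1 := by
          rw [Function.update_of_ne (Ne.symm hab)]; exact ha.2.1
        have e1 : wt (Function.update ρ b 1) = 1 + wt (b.removeNth ρ) := by
          rw [wt_update]; norm_num
        have e2 : wt ρ = (ρ b : ℕ) + wt (b.removeNth ρ) := wt_eq b ρ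
        rw [e5] at e4
        rw [hb.2.1] at e2
        simp only [Fin.val_one, Fin.val_zero] at e4 e2
        omega
      -- the difference set shrinks
      set D := univ.filter fun i => ρ i ≠ ρ' i with hD
      set D₂ := univ.filter fun i => ρ₂ i ≠ ρ' i with hD₂
      have hsub : D₂ ⊆ D := by
        intro i hi
        rw [hD₂, Finset.mem_filter] at hi
        rcases eq_or_ne i a with rfl | hia
        · exact absurd (hρ₂a.trans ha.2.2.symm) hi.2
        rcases eq_or_ne i b with rfl | hib
        · exact absurd (hρ₂b.trans hb.2.2.symm) hi.2
        · rw [hD, Finset.mem_filter]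
          refine ⟨Finset.mem_univ i, ?_⟩
          rw [← hρ₂i i hia hib]
          exact hi.2
      have haD : a ∈ D := by
        rw [hD, Finset.mem_filter]
        refine ⟨Finset.mem_univ a, ?_⟩
        rw [ha.2.1, ha.2.2]
        decide
      have haD₂ : a ∉ D₂ := by
        rw [hD₂, Finset.mem_filter]
        intro h
        exact h.2 (hρ₂a.trans ha.2.2.symm)
      have hlt : D₂.card < n := by
        rw [← hn]
        exact Finset.card_lt_card ⟨hsub, fun hDsub => haD₂ (hDsub haD)⟩
      rw [hcount]
      exact ih D₂.card hlt ρ₂ ρ' rfl (hwρ₂.trans hw)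

def row (n w : ℕ) : Fin n → Fin 2 := fun i => if (i : ℕ) < w then 1 else 0

lemma wt_row (n w : ℕ) (h : w ≤ n) : wt (row n w) = w := by
  have hv : ∀ i : Fin n, ((row n w i : Fin 2) : ℕ) = if (i : ℕ) < w then 1 else 0 := by
    intro i
    rw [row]
    split <;> rfl
  rw [wt, Finset.sum_congr rfl fun i _ => hv i,
    Fin.sum_univ_eq_sum_range (fun m => if m < w then 1 else 0) n,
    ← Finset.card_filter]
  rw [show Finset.filter (fun m => m < w) (Finset.range n) = Finset.range w from by
    ext m; simp; omega]
  exact Finset.card_range w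

lemma cax_to_CX {t : ℕ} {C : Multiset (Fin (t+1) → Fin 2)}
    (hC : IsCAX ((t+1).factorial) t (t+1) 2 C) :
    ∃ x ≤ fct t (t/2), C = CX t x := by
  classical
  set g : ℕ → ℕ := fun w => C.count (row (t+1) w) with hg
  have hcnt : ∀ ρ : Fin (t+1) → Fin 2, C.count ρ = g (wt ρ) := by
    intro ρ
    exact count_eq_of_wt_eq hC ρ (row (t+1) (wt ρ)) (wt_row (t+1) (wt ρ) (wt_le ρ)).symm
  have hrec : ∀ w, w ≤ t → g w + g (w+1) = fct t w := by
    intro w hw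
    have h := key_eq hC (0 : Fin (t+1)) (row t w)
    rw [hcnt, hcnt] at h
    rw [show wt (ins 0 0 (row t w)) = wt (row t w) from by
        rw [ins, wt_insertNth, show ((0:Fin 2):ℕ) = 0 by decide, Nat.zero_add],
      show wt (ins 0 1 (row t w)) = wt (row t w) + 1 from by
        rw [ins, wt_insertNth, show ((1:Fin 2):ℕ) = 1 by decide]; omega,
      wt_row t w hw] at h
    exact h
  have hm : t/2 ≤ t := Nat.div_le_self t 2
  have hxle : g (t/2) ≤ fct t (t/2) := by
    have := hrec (t/2) hm
    omega
  refine ⟨g (t/2), hxle, ?_⟩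
  set x := g (t/2) with hx
  have up : ∀ k, t/2 + k ≤ t + 1 → (g (t/2 + k) : ℤ) = gZ t (x : ℤ) (t/2 + k) := by
    intro k
    induction k with
    | zero => intro _; rw [Nat.add_zero, gZ_mid]
    | succ k ih =>
      intro hk
      have h1 := hrec (t/2 + k) (by omega)
      have h2 := gZ_rec t (x : ℤ) (t/2 + k)
      have h3 := ih (by omega)
      have e : t/2 + (k+1) = (t/2 + k) + 1 := by omega
      rw [e]
      have h4 : (g (t/2+k) : ℤ) + (g (t/2+k+1) : ℤ) = (fct t (t/2+k) : ℤ) := by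
        exact_mod_cast h1
      linarith
  have dn : ∀ k, (g (t/2 - k) : ℤ) = gZ t (x : ℤ) (t/2 - k) := by
    intro k
    induction k with
    | zero => rw [Nat.sub_zero, gZ_mid]
    | succ k ih =>
      rcases le_or_gt (t/2) k with h | h
      · rw [show t/2 - (k+1) = t/2 - k by omega]; exact ih
      · have e : t/2 - k = (t/2 - (k+1)) + 1 := by omega
        have h1 := hrec (t/2 - (k+1)) (by omega)
        have h2 := gZ_rec t (x : ℤ) (t/2 - (k+1))
        rw [← e] at h1 h2
        have h4 : (g (t/2-(k+1)) : ℤ) + (g (t/2-k) : ℤ) = (fct t (t/2-(k+1)) : ℤ) := by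
          exact_mod_cast h1
        linarith
  have hall : ∀ w, w ≤ t + 1 → (g w : ℤ) = gZ t (x : ℤ) w := by
    intro w hw
    rcases le_or_gt (t/2) w with h | h
    · have := up (w - t/2) (by omega)
      rwa [show t/2 + (w - t/2) = w by omega] at this
    · have := dn (t/2 - w)
      rwa [show t/2 - (t/2 - w) = w by omega] at this
  refine Multiset.ext.mpr fun ρ => ?_
  rw [count_CX, hcnt ρ, cnt]
  have h := hall (wt ρ) (wt_le ρ)
  omega

theorem binary_cax_count' (t : ℕ) :
    {C : Multiset (Fin (t + 1) → Fin 2) |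
      IsCAX (Nat.factorial (t + 1)) t (t + 1) 2 C}.ncard
      = Nat.factorial (t / 2) * Nat.factorial ((t + 1) / 2) + 1 := by
  classical
  have hset : {C : Multiset (Fin (t + 1) → Fin 2) |
      IsCAX (Nat.factorial (t + 1)) t (t + 1) 2 C}
      = ↑((Finset.range (fct t (t/2) + 1)).image (CX t)) := by
    ext C
    simp only [Set.mem_setOf_eq, Finset.coe_image, Set.mem_image, Finset.mem_coe,
      Finset.mem_range]
    constructor
    · intro h
      obtain ⟨x, hx, rfl⟩ := cax_to_CX h
      exact ⟨x, by omega, rfl⟩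
    · rintro ⟨x, hx, rfl⟩
      exact isCAX_CX t x (by omega)
  rw [hset, Set.ncard_coe_finset]
  have hinj : Set.InjOn (CX t) ↑(Finset.range (fct t (t/2) + 1)) := by
    intro x _ y _ hxy
    have h := congrArg (Multiset.count (row (t+1) (t/2))) hxy
    rw [count_CX, count_CX, wt_row (t+1) (t/2) (by omega), cnt_mid, cnt_mid] at h
    exact h
  rw [Finset.card_image_of_injOn hinj, Finset.card_range]
  rw [fct, show t - t/2 = (t+1)/2 by omega, Nat.mul_comm]

end BCX


/-- For `t ≥ 1`, the number of distinct CA_X((t+1)!; t, t+1, 2)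
(as multisets of rows) is exactly `⌊t/2⌋! · ⌈t/2⌉! + 1`. -/
theorem binary_cax_count (t : ℕ) (ht : 1 ≤ t) :
    {C : Multiset (Fin (t + 1) → Fin 2) |
      IsCAX (Nat.factorial (t + 1)) t (t + 1) 2 C}.ncard
      = Nat.factorial (t / 2) * Nat.factorial ((t + 1) / 2) + 1 := by
  exact BCX.binary_cax_count' t
end
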